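/- arXiv:1802.02420 — 3 statements merged into one kernel-verified Lean document; each statement's English description precedes it below -/
import Mathlib

section
/- Let S be a semigroup with finitely many idempotents and let D be a regular 𝓓-class of S (i.e. D contains an idempotent, equivalently all its elements are regular). Then D coincides with the 𝓙-class containing it, and the principal factor D⁰ = D ∪ {0} (with product x·y = xy if x, y, xy ∈ D and x·y = 0 otherwise) is a completely 0-simple semigroup. -/
section Green

variable {T : Type*} [Semigroup T]

/-- Green's relation 𝓡. -/
def GreenR (a b : T) : Prop := a = b ∨ ∃ x y : T, a * x = b ∧ b * y = a

/-- Green's relation 𝓛. -/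
def GreenL (a b : T) : Prop := a = b ∨ ∃ x y : T, x * a = b ∧ y * b = a

/-- Green's relation 𝓓 = 𝓡 ∘ 𝓛. -/
def GreenD (a b : T) : Prop := ∃ c : T, GreenR a c ∧ GreenL c b

/-- An element is regular if `a = a * b * a` for some `b`. -/
def IsRegularElem (a : T) : Prop := ∃ b : T, a * b * a = a

/-- The principal two-sided ideal `T¹ a T¹`. -/
def principalIdeal (a : T) : Set T :=
  {x | x = a ∨ (∃ u, u * a = x) ∨ (∃ v, a * v = x) ∨ ∃ u v, u * a * v = x}

/-- Green's relation 𝓙. -/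
def GreenJ (a b : T) : Prop := principalIdeal a = principalIdeal b

/-- The 𝓙-preorder. -/
def JleRel (a b : T) : Prop := principalIdeal a ⊆ principalIdeal b

/-- Strict 𝓙-order. -/
def JltRel (a b : T) : Prop := JleRel a b ∧ ¬ JleRel b a

/-- `u` is a (two-sided) identity element. -/
def IsIdentityElem (u : T) : Prop := ∀ x : T, u * x = x ∧ x * u = x

/-- The relation 𝓡̃. -/
def RTilde (a b : T) : Prop := ∀ ε : T, ε * ε = ε → (ε * a = a ↔ ε * b = b)

/-- The relation 𝓛̃. -/
def LTilde (a b : T) : Prop := ∀ ε : T, ε * ε = ε → (a * ε = a ↔ b * ε = b)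

/-- `blockProd p i k = p i * p (i+1) * ⋯ * p (i+k)`. -/
def blockProd (p : ℕ → T) (i : ℕ) : ℕ → T
  | 0 => p i
  | k + 1 => blockProd p i k * p (i + (k + 1))

/-- Multiply `x` by optional (possibly empty) words on both sides. -/
def withCtx (u : Option T) (x : T) (v : Option T) : T :=
  match u, v with
  | none, none => x
  | some u', none => u' * x
  | none, some v' => x * v'
  | some u', some v' => u' * x * v'

/-- Multiply by an optional word on the left. -/
def leftCtx (u : Option T) (x : T) : T := match u with | none => x | some u' => u' * x

/-- Multiply by an optional word on the right. -/
def rightCtx (x : T) (v : Option T) : T := match v with | none => x | some v' => x * v'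

end Green

section IGdef

/-- The set of idempotents of `S`. -/
abbrev IdemE (S : Type*) [Semigroup S] : Type _ := {x : S // x * x = x}

variable {S : Type*} [Semigroup S]

/-- `e, f` form a basic pair if `{e,f} ∩ {ef,fe} ≠ ∅`. -/
def BasicPair (e f : IdemE S) : Prop :=
  (e : S) * f = e ∨ (e : S) * f = f ∨ (f : S) * e = e ∨ (f : S) * e = f

/-- The defining relations of IG(E): `ef = g` whenever `e, f` is a basic pair with
product `g` in `S`. -/
def igRelBase (u v : FreeSemigroup (IdemE S)) : Prop :=
  ∃ e f g : IdemE S, BasicPair e f ∧ (g : S) = (e : S) * (f : S) ∧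
    u = FreeSemigroup.of e * FreeSemigroup.of f ∧ v = FreeSemigroup.of g

/-- The congruence on the free semigroup `E⁺` generated by the defining relations. -/
def igCon (S : Type*) [Semigroup S] : Con (FreeSemigroup (IdemE S)) :=
  conGen (fun u v => igRelBase u v)

/-- The free idempotent generated semigroup IG(E). -/
abbrev IG (S : Type*) [Semigroup S] := (igCon S).Quotient

/-- `w̄`, the image of a word `w ∈ E⁺` in IG(E). -/
def igBar (w : FreeSemigroup (IdemE S)) : IG S := (w : (igCon S).Quotient)

/-- The list of letters of a word. -/
def wordList (w : FreeSemigroup (IdemE S)) : List (IdemE S) := w.head :: w.tail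

/-- The length of a word. -/
def wlen (w : FreeSemigroup (IdemE S)) : ℕ := (wordList w).length

/-- Length of an optional word. -/
def olen (u : Option (FreeSemigroup (IdemE S))) : ℕ :=
  match u with | none => 0 | some u' => wlen u'

/-- `p 1, …, p m` is an r-factorisation of `w`: each factor represents a regular
element of IG(E). -/
def IsRFact (w : FreeSemigroup (IdemE S)) (m : ℕ) (p : ℕ → FreeSemigroup (IdemE S)) : Prop :=
  1 ≤ m ∧ blockProd p 1 (m - 1) = w ∧ ∀ i, 1 ≤ i → i ≤ m → IsRegularElem (igBar (p i))

/-- A minimal r-factorisation: no product of two or more consecutive factors is regular. -/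
def IsMinRFact (w : FreeSemigroup (IdemE S)) (m : ℕ) (p : ℕ → FreeSemigroup (IdemE S)) : Prop :=
  IsRFact w m p ∧
    ∀ i j, 1 ≤ i → i < j → j ≤ m → ¬ IsRegularElem (igBar (blockProd p i (j - i)))

/-- The relation ≈ on m-tuples of words. -/
def TupleApprox (m : ℕ) (p q : ℕ → FreeSemigroup (IdemE S)) : Prop :=
  (∃ i, 1 ≤ i ∧ i ≤ m ∧ igBar (p i) = igBar (q i) ∧
    ∀ j, 1 ≤ j → j ≤ m → j ≠ i → p j = q j) ∨
  (∃ i, ∃ e : IdemE S, 1 ≤ i ∧ i < m ∧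
    igBar (p i) = igBar (q i * FreeSemigroup.of e) ∧
    igBar (q (i + 1)) = igBar (FreeSemigroup.of e * p (i + 1)) ∧
    ∀ j, 1 ≤ j → j ≤ m → j ≠ i → j ≠ i + 1 → p j = q j) ∨
  (∃ i, ∃ e : IdemE S, 1 ≤ i ∧ i < m ∧
    igBar (q i) = igBar (p i * FreeSemigroup.of e) ∧
    igBar (p (i + 1)) = igBar (FreeSemigroup.of e * q (i + 1)) ∧
    ∀ j, 1 ≤ j → j ≤ m → j ≠ i → j ≠ i + 1 → p j = q j)

/-- The relation ∼: the transitive closure of ≈. -/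
def TupleSim (m : ℕ) (p q : ℕ → FreeSemigroup (IdemE S)) : Prop :=
  Relation.TransGen (TupleApprox m) p q

/-- One application of a defining relation of IG(E) inside a word. -/
def RewriteStep (w w' : FreeSemigroup (IdemE S)) : Prop :=
  ∃ (u v : Option (FreeSemigroup (IdemE S))) (x y : FreeSemigroup (IdemE S)),
    (igRelBase x y ∨ igRelBase y x) ∧ w = withCtx u x v ∧ w' = withCtx u y v

/-- `e` is a seed of `w` at (1-based) position `k`. -/
def SeedAt (w : FreeSemigroup (IdemE S)) (e : IdemE S) (k : ℕ) : Prop :=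
  ∃ u v : Option (FreeSemigroup (IdemE S)),
    w = withCtx u (FreeSemigroup.of e) v ∧ k = olen u + 1 ∧
    GreenL (igBar (leftCtx u (FreeSemigroup.of e))) (igBar (FreeSemigroup.of e)) ∧
    GreenR (igBar (FreeSemigroup.of e)) (igBar (rightCtx (FreeSemigroup.of e) v))

/-- The coordinate (position within `w` of the first letter) of the `i`-th factor. -/
def wcoord (p : ℕ → FreeSemigroup (IdemE S)) (i : ℕ) : ℕ :=
  1 + ∑ j ∈ Finset.Ico 1 i, wlen (p j)

end IGdef

open Classical in
/-- Multiplication on the principal factor `D⁰ = D ∪ {0}` (with `none` playing the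
role of the zero element). -/
noncomputable def pfMul {S : Type*} [Semigroup S] (D : Set S) :
    Option D → Option D → Option D
  | some x, some y => if h : (x : S) * y ∈ D then some ⟨(x : S) * y, h⟩ else none
  | _, _ => none

namespace GreenAux

set_option linter.unusedSectionVars false

variable {S : Type*} [Semigroup S]

lemma m_cases (u : WithOne S) : u = 1 ∨ ∃ s : S, u = ↑s := by
  by_cases h : u = 1
  · exact Or.inl h
  · exact Or.inr (by obtain ⟨a, ha⟩ := WithOne.ne_one_iff_exists.mp h; exact ⟨a, ha.symm⟩)

lemma mul_coe_exists (m : WithOne S) (s : S) : ∃ t : S, m * (s : WithOne S) = ↑t := by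
  rcases m_cases m with h | ⟨r, h⟩
  · exact ⟨s, by rw [h, one_mul]⟩
  · exact ⟨r * s, by rw [h, WithOne.coe_mul]⟩

lemma coe_mul_exists (s : S) (m : WithOne S) : ∃ t : S, (s : WithOne S) * m = ↑t := by
  rcases m_cases m with h | ⟨r, h⟩
  · exact ⟨s, by rw [h, mul_one]⟩
  · exact ⟨s * r, by rw [h, WithOne.coe_mul]⟩

lemma greenR_iff (a b : S) :
    GreenR a b ↔ ∃ x y : WithOne S, (a : WithOne S) * x = ↑b ∧ (b : WithOne S) * y = ↑a := by
  constructor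
  · rintro (rfl | ⟨x, y, hx, hy⟩)
    · exact ⟨1, 1, by simp⟩
    · exact ⟨↑x, ↑y, by rw [← WithOne.coe_mul, hx], by rw [← WithOne.coe_mul, hy]⟩
  · rintro ⟨x, y, hx, hy⟩
    rcases m_cases x with rfl | ⟨x₀, rfl⟩
    · exact Or.inl (WithOne.coe_inj.mp (by simpa using hx))
    rcases m_cases y with rfl | ⟨y₀, rfl⟩
    · exact Or.inl (WithOne.coe_inj.mp (by simpa using hy)).symm
    · exact Or.inr ⟨x₀, y₀, WithOne.coe_inj.mp (by simpa using hx),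
        WithOne.coe_inj.mp (by simpa using hy)⟩

lemma greenL_iff (a b : S) :
    GreenL a b ↔ ∃ x y : WithOne S, x * (a : WithOne S) = ↑b ∧ y * (b : WithOne S) = ↑a := by
  constructor
  · rintro (rfl | ⟨x, y, hx, hy⟩)
    · exact ⟨1, 1, by simp⟩
    · exact ⟨↑x, ↑y, by rw [← WithOne.coe_mul, hx], by rw [← WithOne.coe_mul, hy]⟩
  · rintro ⟨x, y, hx, hy⟩
    rcases m_cases x with rfl | ⟨x₀, rfl⟩
    · exact Or.inl (WithOne.coe_inj.mp (by simpa using hx))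
    rcases m_cases y with rfl | ⟨y₀, rfl⟩
    · exact Or.inl (WithOne.coe_inj.mp (by simpa using hy)).symm
    · exact Or.inr ⟨x₀, y₀, WithOne.coe_inj.mp (by simpa using hx),
        WithOne.coe_inj.mp (by simpa using hy)⟩

lemma mem_pid_iff (a y : S) :
    y ∈ principalIdeal a ↔ ∃ u v : WithOne S, u * (a : WithOne S) * v = ↑y := by
  constructor
  · rintro (rfl | ⟨u, hu⟩ | ⟨v, hv⟩ | ⟨u, v, huv⟩)
    · exact ⟨1, 1, by simp⟩
    · exact ⟨↑u, 1, by rw [mul_one, ← WithOne.coe_mul, hu]⟩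
    · exact ⟨1, ↑v, by rw [one_mul, ← WithOne.coe_mul, hv]⟩
    · exact ⟨↑u, ↑v, by rw [← WithOne.coe_mul, ← WithOne.coe_mul, huv]⟩
  · rintro ⟨u, v, huv⟩
    rcases m_cases u with rfl | ⟨u₀, rfl⟩
    · rcases m_cases v with rfl | ⟨v₀, rfl⟩
      · exact Or.inl (WithOne.coe_inj.mp (by simpa using huv)).symm
      · exact Or.inr (Or.inr (Or.inl ⟨v₀, WithOne.coe_inj.mp (by simpa using huv)⟩))
    · rcases m_cases v with rfl | ⟨v₀, rfl⟩
      · exact Or.inr (Or.inl ⟨u₀, WithOne.coe_inj.mp (by simpa using huv)⟩)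
      · exact Or.inr (Or.inr (Or.inr ⟨u₀, v₀, WithOne.coe_inj.mp
          (by simpa [← WithOne.coe_mul] using huv)⟩))

-- basic equivalence facts
lemma greenR_refl (a : S) : GreenR a a := Or.inl rfl
lemma greenL_refl (a : S) : GreenL a a := Or.inl rfl

lemma greenR_symm {a b : S} (h : GreenR a b) : GreenR b a := by
  rcases h with rfl | ⟨x, y, hx, hy⟩
  exacts [Or.inl rfl, Or.inr ⟨y, x, hy, hx⟩]

lemma greenL_symm {a b : S} (h : GreenL a b) : GreenL b a := by
  rcases h with rfl | ⟨x, y, hx, hy⟩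
  exacts [Or.inl rfl, Or.inr ⟨y, x, hy, hx⟩]

lemma greenR_trans {a b c : S} (h1 : GreenR a b) (h2 : GreenR b c) : GreenR a c := by
  rw [greenR_iff] at *
  obtain ⟨x, y, hx, hy⟩ := h1
  obtain ⟨z, w, hz, hw⟩ := h2
  exact ⟨x * z, w * y, by rw [← mul_assoc, hx, hz], by rw [← mul_assoc, hw, hy]⟩

lemma greenL_trans {a b c : S} (h1 : GreenL a b) (h2 : GreenL b c) : GreenL a c := by
  rw [greenL_iff] at *
  obtain ⟨x, y, hx, hy⟩ := h1
  obtain ⟨z, w, hz, hw⟩ := h2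
  exact ⟨z * x, y * w, by rw [mul_assoc, hx, hz], by rw [mul_assoc, hw, hy]⟩

/-- `R ∘ L ⊆ L ∘ R` -/
lemma swapRL {a c b : S} (h1 : GreenR a c) (h2 : GreenL c b) :
    ∃ d : S, GreenL a d ∧ GreenR d b := by
  rcases h1 with rfl | ⟨p, p', hp, hp'⟩
  · exact ⟨b, h2, greenR_refl b⟩
  rcases h2 with rfl | ⟨s, s', hs, hs'⟩
  · exact ⟨a, greenL_refl a, Or.inr ⟨p, p', hp, hp'⟩⟩
  refine ⟨s * a, Or.inr ⟨s, s', rfl, ?_⟩, Or.inr ⟨p, p', ?_, ?_⟩⟩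
  · -- s' * (s * a) = a
    have h : s' * (s * c) = c := by rw [hs, hs']
    calc s' * (s * a) = s' * (s * (c * p')) := by rw [hp']
    _ = s' * (s * c) * p' := by simp [mul_assoc]
    _ = c * p' := by rw [h]
    _ = a := hp'
  · calc s * a * p = s * (a * p) := by rw [mul_assoc]
    _ = s * c := by rw [hp]
    _ = b := hs
  · calc b * p' = s * c * p' := by rw [hs]
    _ = s * (c * p') := by rw [mul_assoc]
    _ = s * a := by rw [hp']

/-- `L ∘ R ⊆ R ∘ L` -/
lemma swapLR {x b y : S} (h1 : GreenL x b) (h2 : GreenR b y) :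
    ∃ d : S, GreenR x d ∧ GreenL d y := by
  rcases h1 with rfl | ⟨s, s', hs, hs'⟩
  · exact ⟨y, h2, greenL_refl y⟩
  rcases h2 with rfl | ⟨p, p', hp, hp'⟩
  · exact ⟨x, greenR_refl x, Or.inr ⟨s, s', hs, hs'⟩⟩
  refine ⟨x * p, Or.inr ⟨p, p', rfl, ?_⟩, Or.inr ⟨s, s', ?_, ?_⟩⟩
  · -- x * p * p' = x
    calc x * p * p' = s' * b * p * p' := by rw [hs']
    _ = s' * (b * p * p') := by simp [mul_assoc]
    _ = s' * b := by rw [hp, hp']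
    _ = x := hs'
  · calc s * (x * p) = (s * x) * p := by rw [mul_assoc]
    _ = b * p := by rw [hs]
    _ = y := hp
  · calc s' * y = s' * (b * p) := by rw [hp]
    _ = (s' * b) * p := by rw [mul_assoc]
    _ = x * p := by rw [hs']

lemma greenD_refl (a : S) : GreenD a a := ⟨a, greenR_refl a, greenL_refl a⟩

lemma greenD_symm {a b : S} (h : GreenD a b) : GreenD b a := by
  obtain ⟨c, h1, h2⟩ := h
  obtain ⟨d, hd1, hd2⟩ := swapRL h1 h2
  exact ⟨d, greenR_symm hd2, greenL_symm hd1⟩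

lemma greenD_trans {a b c : S} (h1 : GreenD a b) (h2 : GreenD b c) : GreenD a c := by
  obtain ⟨x, hx1, hx2⟩ := h1
  obtain ⟨y, hy1, hy2⟩ := h2
  obtain ⟨d, hd1, hd2⟩ := swapLR hx2 hy1
  exact ⟨d, greenR_trans hx1 hd1, greenL_trans hd2 hy2⟩

lemma greenD_of_greenR {a b : S} (h : GreenR a b) : GreenD a b := ⟨b, h, greenL_refl b⟩
lemma greenD_of_greenL {a b : S} (h : GreenL a b) : GreenD a b := ⟨a, greenR_refl a, h⟩

lemma self_mem_pid (a : S) : a ∈ principalIdeal a := Or.inl rfl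

lemma pid_mono {a b : S} (h : b ∈ principalIdeal a) : principalIdeal b ⊆ principalIdeal a := by
  rw [mem_pid_iff] at h
  obtain ⟨u, v, huv⟩ := h
  intro z hz
  rw [mem_pid_iff] at hz ⊢
  obtain ⟨p, q, hpq⟩ := hz
  exact ⟨p * u, v * q, by rw [← hpq, ← huv]; simp [mul_assoc]⟩

lemma greenJ_of_greenR {a b : S} (h : GreenR a b) : GreenJ a b := by
  rw [greenR_iff] at h
  obtain ⟨x, y, hx, hy⟩ := h
  apply Set.Subset.antisymm
  · exact pid_mono ((mem_pid_iff b a).mpr ⟨1, y, by rw [one_mul, hy]⟩)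
  · exact pid_mono ((mem_pid_iff a b).mpr ⟨1, x, by rw [one_mul, hx]⟩)

lemma greenJ_of_greenL {a b : S} (h : GreenL a b) : GreenJ a b := by
  rw [greenL_iff] at h
  obtain ⟨x, y, hx, hy⟩ := h
  apply Set.Subset.antisymm
  · exact pid_mono ((mem_pid_iff b a).mpr ⟨y, 1, by rw [mul_one, hy]⟩)
  · exact pid_mono ((mem_pid_iff a b).mpr ⟨x, 1, by rw [mul_one, hx]⟩)

lemma greenJ_of_greenD {a b : S} (h : GreenD a b) : GreenJ a b := by
  obtain ⟨c, h1, h2⟩ := h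
  exact (greenJ_of_greenR h1).trans (greenJ_of_greenL h2)

lemma reg_of_greenR {x c : S} (hc : IsRegularElem c) (h : GreenR x c) : IsRegularElem x := by
  rcases h with rfl | ⟨p, q, hp, hq⟩
  · exact hc
  obtain ⟨b, hb⟩ := hc
  exact ⟨p * b, by
    calc x * (p * b) * x = x * p * b * x := by simp [mul_assoc]
    _ = c * b * x := by rw [hp]
    _ = c * b * (c * q) := by rw [hq]
    _ = (c * b * c) * q := by simp [mul_assoc]
    _ = c * q := by rw [hb]
    _ = x := hq⟩

lemma reg_of_greenL {c y : S} (hy : IsRegularElem y) (h : GreenL c y) : IsRegularElem c := by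
  rcases h with rfl | ⟨s, t, hs, ht⟩
  · exact hy
  obtain ⟨b, hb⟩ := hy
  exact ⟨b * s, by
    calc c * (b * s) * c = c * (b * s) * (t * y) := by rw [ht]
    _ = ((t * y) * b * (s * c)) := by rw [← ht]; simp [mul_assoc]
    _ = t * (y * b * y) := by rw [hs]; simp [mul_assoc]
    _ = t * y := by rw [hb]
    _ = c := ht⟩

lemma j_implies_d [Finite {f : S // f * f = f}] {x e : S} (he : e * e = e)
    (hJ : GreenJ x e) : GreenD x e := by
  have hex : e ∈ principalIdeal x := by rw [hJ]; exact self_mem_pid e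
  have hxe : x ∈ principalIdeal e := by rw [← hJ]; exact self_mem_pid x
  obtain ⟨u₀, v₀, hu₀⟩ := (mem_pid_iff x e).mp hex
  obtain ⟨p₀, q₀, hp₀⟩ := (mem_pid_iff e x).mp hxe
  set E : WithOne S := (e : WithOne S) with hEdef
  set X : WithOne S := (x : WithOne S) with hXdef
  have hE : E * E = E := by rw [hEdef, ← WithOne.coe_mul, he]
  set u : WithOne S := E * u₀ with hudef
  set v : WithOne S := v₀ * E with hvdef
  set p : WithOne S := p₀ * E with hpdef
  set q : WithOne S := E * q₀ with hqdef
  have eu : E * u = u := by rw [hudef, ← mul_assoc, hE]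
  have ve : v * E = v := by rw [hvdef, mul_assoc, hE]
  have pe : p * E = p := by rw [hpdef, mul_assoc, hE]
  have eq' : E * q = q := by rw [hqdef, ← mul_assoc, hE]
  have hu : u * X * v = E := by
    rw [hudef, hvdef]
    calc E * u₀ * X * (v₀ * E) = E * (u₀ * X * v₀) * E := by simp only [mul_assoc]
    _ = E * E * E := by rw [hu₀]
    _ = E := by rw [hE, hE]
  have hp : p * E * q = X := by
    rw [hpdef, hqdef]
    calc p₀ * E * E * (E * q₀) = p₀ * (E * E * E) * q₀ := by simp only [mul_assoc]
    _ = p₀ * E * q₀ := by rw [hE, hE]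
    _ = X := hp₀
  set A : WithOne S := u * p with hAdef
  set B : WithOne S := q * v with hBdef
  have hAB : A * B = E := by
    calc A * B = u * (p * E * q) * v := by
          rw [hAdef, hBdef, pe]; simp only [mul_assoc]
    _ = u * X * v := by rw [hp]
    _ = E := hu
  have EA : E * A = A := by rw [hAdef, ← mul_assoc, eu]
  have AE : A * E = A := by rw [hAdef, mul_assoc, pe]
  have EB : E * B = B := by rw [hBdef, ← mul_assoc, eq']
  have BE : B * E = B := by rw [hBdef, mul_assoc, ve]
  have hAnBn : ∀ n : ℕ, A ^ (n + 1) * B ^ (n + 1) = E := by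
    intro n
    induction n with
    | zero => simpa using hAB
    | succ n ih =>
      calc A ^ (n + 2) * B ^ (n + 2) = (A * A ^ (n + 1)) * (B ^ (n + 1) * B) := by
            rw [pow_succ' A (n+1), pow_succ B (n+1)]
      _ = A * ((A ^ (n + 1) * B ^ (n + 1)) * B) := by simp only [mul_assoc]
      _ = A * (E * B) := by rw [ih]
      _ = E := by rw [EB, hAB]
  have EAn : ∀ n : ℕ, E * A ^ (n + 1) = A ^ (n + 1) := by
    intro n; rw [pow_succ' A n, ← mul_assoc, EA]
  have AnE : ∀ n : ℕ, A ^ (n + 1) * E = A ^ (n + 1) := by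
    intro n; rw [pow_succ A n, mul_assoc, AE]
  have EBn : ∀ n : ℕ, E * B ^ (n + 1) = B ^ (n + 1) := by
    intro n; rw [pow_succ' B n, ← mul_assoc, EB]
  have BnE : ∀ n : ℕ, B ^ (n + 1) * E = B ^ (n + 1) := by
    intro n; rw [pow_succ B n, mul_assoc, BE]
  -- the idempotents B^{n+1} A^{n+1}
  have hF : ∀ n : ℕ, ∃ t : S, (t : WithOne S) = B ^ (n + 1) * A ^ (n + 1) ∧ t * t = t := by
    intro n
    have hidem : (B ^ (n + 1) * A ^ (n + 1)) * (B ^ (n + 1) * A ^ (n + 1))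
        = B ^ (n + 1) * A ^ (n + 1) := by
      calc (B ^ (n + 1) * A ^ (n + 1)) * (B ^ (n + 1) * A ^ (n + 1))
          = B ^ (n + 1) * ((A ^ (n + 1) * B ^ (n + 1)) * A ^ (n + 1)) := by
            simp only [mul_assoc]
      _ = B ^ (n + 1) * (E * A ^ (n + 1)) := by rw [hAnBn]
      _ = B ^ (n + 1) * A ^ (n + 1) := by rw [EAn]
    -- coerced
    obtain ⟨pS, hpS⟩ := mul_coe_exists p₀ e
    have hpcoe : p = (pS : WithOne S) := by rw [hpdef, hEdef]; exact hpS
    obtain ⟨AS, hAS⟩ := mul_coe_exists u pS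
    have hAcoe : A = (AS : WithOne S) := by rw [hAdef, hpcoe, hAS]
    have : ∃ t : S, B ^ (n + 1) * A ^ (n + 1) = (t : WithOne S) := by
      have : B ^ (n + 1) * A ^ (n + 1) = (B ^ (n + 1) * A ^ n) * (AS : WithOne S) := by
        rw [pow_succ A n, hAcoe, mul_assoc]
      obtain ⟨t, ht⟩ := mul_coe_exists (B ^ (n + 1) * A ^ n) AS
      exact ⟨t, by rw [this, ht]⟩
    obtain ⟨t, ht⟩ := this
    refine ⟨t, ht.symm, ?_⟩
    have : (↑(t * t) : WithOne S) = ↑t := by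
      rw [WithOne.coe_mul, ← ht, hidem]
    exact WithOne.coe_inj.mp this
  choose F hF1 hF2 using hF
  set G : ℕ → {f : S // f * f = f} := fun n => ⟨F n, hF2 n⟩ with hGdef
  obtain ⟨n, m, hnm, hGeq⟩ := Finite.exists_ne_map_eq_of_infinite G
  -- reduce to the case n < m
  have key : ∀ n m : ℕ, n < m → F n = F m → B * A = E := by
    intro n m hlt hFe
    have hmid : B ^ (n + 1) * A ^ (n + 1) = B ^ (m + 1) * A ^ (m + 1) := by
      rw [← hF1 n, ← hF1 m, hFe]
    obtain ⟨k, hk⟩ := Nat.exists_eq_add_of_lt hlt  -- m = n + k + 1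
    have hmn : m + 1 = (n + 1) + (k + 1) := by omega
    have hmn' : m + 1 = (k + 1) + (n + 1) := by omega
    have hEj : E = B ^ (k + 1) * A ^ (k + 1) := by
      calc E = E * E := (hE).symm
      _ = (A ^ (n+1) * B ^ (n+1)) * (A ^ (n+1) * B ^ (n+1)) := by rw [hAnBn]
      _ = A ^ (n+1) * ((B ^ (n+1) * A ^ (n+1)) * B ^ (n+1)) := by simp only [mul_assoc]
      _ = A ^ (n+1) * ((B ^ (m+1) * A ^ (m+1)) * B ^ (n+1)) := by rw [hmid]
      _ = A ^ (n+1) * (((B ^ (n+1) * B ^ (k+1)) * (A ^ (k+1) * A ^ (n+1))) * B ^ (n+1)) := by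
            rw [show (B:WithOne S) ^ (m+1) = B ^ (n+1) * B ^ (k+1) by rw [← pow_add, ← hmn],
                show (A:WithOne S) ^ (m+1) = A ^ (k+1) * A ^ (n+1) by rw [← pow_add, ← hmn']]
      _ = (A ^ (n+1) * B ^ (n+1)) * ((B ^ (k+1) * A ^ (k+1)) * (A ^ (n+1) * B ^ (n+1))) := by
            simp only [mul_assoc]
      _ = E * ((B ^ (k+1) * A ^ (k+1)) * E) := by rw [hAnBn]
      _ = (E * B ^ (k+1)) * (A ^ (k+1) * E) := by simp only [mul_assoc]
      _ = B ^ (k+1) * A ^ (k+1) := by rw [EBn, AnE]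
    calc B * A = (E * B) * A := by rw [EB]
    _ = ((B ^ (k+1) * A ^ (k+1)) * B) * A := by rw [← hEj]
    _ = B ^ (k+1) * (A ^ k * ((A * B) * A)) := by
          rw [pow_succ A k]; simp only [mul_assoc]
    _ = B ^ (k+1) * (A ^ k * (E * A)) := by rw [hAB]
    _ = B ^ (k+1) * (A ^ k * A) := by rw [EA]
    _ = B ^ (k+1) * A ^ (k+1) := by rw [← pow_succ]
    _ = E := hEj.symm
  have hBA : B * A = E := by
    rcases hnm.lt_or_gt with h | h
    · exact key n m h (by simpa [hGdef, Subtype.ext_iff] using hGeq)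
    · exact key m n h (by simpa [hGdef, Subtype.ext_iff] using hGeq.symm)
  -- conclude
  obtain ⟨c, hc⟩ := coe_mul_exists x v
  have hc' : (c : WithOne S) = X * v := by rw [← hc, hXdef]
  have hR : GreenR x c := by
    rw [greenR_iff]
    refine ⟨v, u * p * E * q, by rw [← hXdef, ← hc'], ?_⟩
    calc (c : WithOne S) * (u * p * E * q) = (p * E * q * v) * (u * p * E * q) := by
          rw [hc', ← hp]
    _ = p * E * ((q * v) * (u * p)) * E * q := by simp only [mul_assoc]
    _ = p * E * E * E * q := by rw [← hAdef, ← hBdef, hBA]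
    _ = p * E * q := by
          have hE2 : ∀ m : WithOne S, E * (E * m) = E * m := fun m => by rw [← mul_assoc, hE]
          simp only [mul_assoc, hE2]
    _ = X := hp
  have hL : GreenL c e := by
    rw [greenL_iff]
    refine ⟨u, X * v₀, ?_, ?_⟩
    · rw [hc', ← mul_assoc, ← hEdef, hu]
    · rw [mul_assoc, ← hvdef, hc']
  exact ⟨c, hR, hL⟩


lemma exists_min_idem [Finite {f : S // f * f = f}] (P : S → Prop)
    (hex : ∃ f : S, f * f = f ∧ P f) :
    ∃ ε : S, ε * ε = ε ∧ P ε ∧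
      ∀ f : S, f * f = f → P f → f * ε = f → ε * f = f → f = ε := by
  classical
  set r : {f : S // f * f = f} → {f : S // f * f = f} → Prop :=
    fun f g => (f : S) * g = f ∧ (g : S) * f = f ∧ f ≠ g with hr
  haveI : IsTrans _ r := ⟨by
    rintro f g h ⟨h1, h2, h3⟩ ⟨h4, h5, h6⟩
    refine ⟨?_, ?_, ?_⟩
    · calc (f:S) * h = (f * g) * h := by rw [h1]
      _ = f * (g * h) := mul_assoc _ _ _
      _ = f * g := by rw [h4]
      _ = f := h1
    · calc (h:S) * f = h * (g * f) := by rw [h2]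
      _ = (h * g) * f := (mul_assoc _ _ _).symm
      _ = g * f := by rw [h5]
      _ = f := h2
    · rintro rfl
      apply h3
      apply Subtype.ext
      calc (f:S) = g * f := h2.symm
      _ = g := h4⟩
  haveI : IsIrrefl _ r := ⟨by rintro f ⟨-, -, h⟩; exact h rfl⟩
  have hwf : WellFounded r := Finite.wellFounded_of_trans_of_irrefl r
  obtain ⟨f0, hf0⟩ := hex
  obtain ⟨ε, hεs, hmin⟩ := hwf.has_min {g : {f : S // f * f = f} | P g}
    ⟨⟨f0, hf0.1⟩, hf0.2⟩
  refine ⟨ε, ε.2, hεs, ?_⟩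
  intro f hf hPf hfe hef
  by_contra hne
  exact hmin ⟨f, hf⟩ hPf ⟨hfe, hef, fun h => hne (congrArg Subtype.val h)⟩

open Classical in
lemma pf_some (D : Set S) (x y : D) :
    pfMul D (some x) (some y) =
      if h : (x : S) * y ∈ D then some ⟨(x : S) * y, h⟩ else none := rfl

lemma pf_none_left (D : Set S) (t : Option D) : pfMul D none t = none := by
  cases t <;> rfl

lemma pf_none_right (D : Set S) (t : Option D) : pfMul D t none = none := by
  cases t <;> rfl

lemma pf_assoc (D : Set S)
    (hmul : ∀ x y z : S, x ∈ D → y ∈ D → x * y * z ∈ D → x * y ∈ D ∧ y * z ∈ D) :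
    ∀ x y z : Option D, pfMul D (pfMul D x y) z = pfMul D x (pfMul D y z) := by
  intro x y z
  cases x with
  | none => simp only [pf_none_left]
  | some x =>
    cases y with
    | none => simp only [pf_none_left, pf_none_right]
    | some y =>
      cases z with
      | none => simp only [pf_none_right]
      | some z =>
        by_cases h1 : (x : S) * y ∈ D
        · by_cases h2 : (x : S) * y * z ∈ D
          · have h3 := (hmul x y z x.2 y.2 h2).2
            have h4 : (x : S) * ((y : S) * z) ∈ D := by rw [← mul_assoc]; exact h2
            rw [pf_some D x y, dif_pos h1, pf_some D y z, dif_pos h3,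
              pf_some, dif_pos h2, pf_some, dif_pos h4]
            exact congrArg some (Subtype.ext (mul_assoc _ _ _))
          · have h4 : ¬ ((x : S) * ((y : S) * z) ∈ D) := by rw [← mul_assoc]; exact h2
            rw [pf_some D x y, dif_pos h1, pf_some D y z, pf_some, dif_neg h2]
            by_cases h3 : (y : S) * z ∈ D
            · rw [dif_pos h3, pf_some, dif_neg h4]
            · rw [dif_neg h3, pf_none_right]
        · have h4 : ¬ ((x : S) * ((y : S) * z) ∈ D) := fun h =>
            h1 ((hmul x y z x.2 y.2 (by rw [mul_assoc]; exact h)).1)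
          rw [pf_some D x y, dif_neg h1, pf_none_left, pf_some D y z]
          by_cases h3 : (y : S) * z ∈ D
          · rw [dif_pos h3, pf_some, dif_neg h4]
          · rw [dif_neg h3, pf_none_right]

end GreenAux

open GreenAux in
theorem stmt0 {S : Type*} [Semigroup S] [Finite (IdemE S)]
    (a : S) (D : Set S) (hD : D = {x | GreenD a x})
    (e : S) (he : e * e = e) (heD : e ∈ D) :
    -- D coincides with the 𝓙-class containing it
    {x | GreenJ a x} = D ∧
    -- the principal factor D⁰ is a semigroup …
    (∀ x y z : Option D, pfMul D (pfMul D x y) z = pfMul D x (pfMul D y z)) ∧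
    -- … which is 0-simple: (D⁰)² ≠ {0} …
    (∃ x y : Option D, pfMul D x y ≠ none) ∧
    -- … its only two-sided ideals are {0} and D⁰ …
    (∀ I : Set (Option D), I.Nonempty →
      (∀ b ∈ I, ∀ t : Option D, pfMul D t b ∈ I ∧ pfMul D b t ∈ I) →
      I = {none} ∨ I = Set.univ) ∧
    -- … and it has a primitive idempotent, hence is completely 0-simple.
    (∃ ε : Option D, pfMul D ε ε = ε ∧ ε ≠ none ∧
      ∀ φ : Option D, pfMul D φ φ = φ → φ ≠ none →
        pfMul D ε φ = φ → pfMul D φ ε = φ → φ = ε) := by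

  classical
  have hmemD : ∀ x : S, x ∈ D ↔ GreenD a x := fun x => by rw [hD]; exact Iff.rfl
  have hae : GreenD a e := (hmemD e).mp heD
  have part1 : {x | GreenJ a x} = D := by
    ext x
    simp only [Set.mem_setOf_eq, hmemD]
    constructor
    · intro hx
      have hxe : GreenJ x e := hx.symm.trans (greenJ_of_greenD hae)
      exact greenD_trans hae (greenD_symm (j_implies_d he hxe))
    · exact greenJ_of_greenD
  have hJmem : ∀ x : S, x ∈ D ↔ GreenJ a x := by
    intro x
    constructor
    · intro h; rw [← part1] at h; exact h
    · intro h; rw [← part1]; exact h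
  have hreg : ∀ x : S, x ∈ D → IsRegularElem x := by
    intro x hx
    obtain ⟨c, hRxc, hLce⟩ := greenD_trans (greenD_symm ((hmemD x).mp hx)) hae
    exact reg_of_greenR (reg_of_greenL ⟨e, by rw [he, he]⟩ hLce) hRxc
  have squeeze : ∀ b d c' : S, b ∈ D → c' ∈ D → d ∈ principalIdeal b →
      c' ∈ principalIdeal d → d ∈ D := by
    intro b d c' hb hc' hdb hcd
    have hab : GreenJ a b := (hJmem b).mp hb
    have hac : GreenJ a c' := (hJmem c').mp hc'
    refine (hJmem d).mpr (Set.Subset.antisymm ?_ ?_)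
    · rw [hac]; exact pid_mono hcd
    · rw [hab]; exact pid_mono hdb
  have mulD : ∀ x y z : S, x ∈ D → y ∈ D → x * y * z ∈ D → x * y ∈ D ∧ y * z ∈ D := by
    intro x y z hx hy hxyz
    constructor
    · exact squeeze x (x * y) (x * y * z) hx hxyz
        ((mem_pid_iff x (x * y)).mpr ⟨1, ↑y, by rw [one_mul, ← WithOne.coe_mul]⟩)
        ((mem_pid_iff (x * y) (x * y * z)).mpr ⟨1, ↑z, by rw [one_mul, ← WithOne.coe_mul]⟩)
    · exact squeeze y (y * z) (x * y * z) hy hxyz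
        ((mem_pid_iff y (y * z)).mpr ⟨1, ↑z, by rw [one_mul, ← WithOne.coe_mul]⟩)
        ((mem_pid_iff (y * z) (x * y * z)).mpr
          ⟨↑x, 1, by rw [mul_one, ← WithOne.coe_mul, ← mul_assoc]⟩)
  refine ⟨part1, pf_assoc D mulD, ?_, ?_, ?_⟩
  · -- nonzero square
    have heeD : (e : S) * e ∈ D := by rw [he]; exact heD
    exact ⟨some ⟨e, heD⟩, some ⟨e, heD⟩, by
      rw [pf_some, dif_pos heeD]; exact Option.some_ne_none _⟩
  · -- ideals
    rintro I ⟨b0, hb0⟩ hcl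
    have hnone : none ∈ I := by
      have := (hcl b0 hb0 none).2
      rwa [pf_none_right] at this
    by_cases hall : ∀ w ∈ I, w = none
    · left
      apply Set.Subset.antisymm
      · intro w hw; exact hall w hw
      · intro w hw; rw [Set.mem_singleton_iff] at hw; rw [hw]; exact hnone
    · right
      push_neg at hall
      obtain ⟨w, hwI, hwne⟩ := hall
      obtain ⟨⟨x, hx⟩, rfl⟩ := Option.ne_none_iff_exists'.mp hwne
      -- every element of D lies in I
      have main : ∀ y : S, ∀ hy : y ∈ D, (some ⟨y, hy⟩ : Option D) ∈ I := by
        intro y hy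
        have hxy : GreenD x y := greenD_trans (greenD_symm ((hmemD x).mp hx)) ((hmemD y).mp hy)
        obtain ⟨c, hR, hL⟩ := hxy
        have hcD : c ∈ D := (hmemD c).mpr (greenD_trans ((hmemD x).mp hx) (greenD_of_greenR hR))
        -- step 1 : some c ∈ I
        have step1 : (some ⟨c, hcD⟩ : Option D) ∈ I := by
          rcases hR with rfl | ⟨p, q', hp, hq⟩
          · exact hwI
          · obtain ⟨b, hb⟩ := hreg x hx
            have hxd1 : x * (b * c) = c := by
              calc x * (b * c) = x * (b * (x * p)) := by rw [hp]
              _ = (x * b * x) * p := by simp only [mul_assoc]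
              _ = x * p := by rw [hb]
              _ = c := hp
            have hd1D : b * c ∈ D := by
              refine squeeze c (b * c) c hcD hcD ?_ ?_
              · exact (mem_pid_iff c (b * c)).mpr ⟨↑b, 1, by rw [mul_one, ← WithOne.coe_mul]⟩
              · exact (mem_pid_iff (b * c) c).mpr ⟨↑x, 1, by rw [mul_one, ← WithOne.coe_mul, hxd1]⟩
            have hmm := (hcl _ hwI (some ⟨b * c, hd1D⟩)).2
            have heq : pfMul D (some ⟨x, hx⟩) (some ⟨b * c, hd1D⟩) = some ⟨c, hcD⟩ := by
              have hin : (x : S) * (b * c) ∈ D := by rw [hxd1]; exact hcD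
              rw [pf_some, dif_pos hin]
              exact congrArg some (Subtype.ext hxd1)
            rwa [heq] at hmm
        -- step 2 : from c L y
        rcases hL with rfl | ⟨s, t, hs, ht⟩
        · exact step1
        · obtain ⟨b', hb'⟩ := hreg c hcD
          have hd2c : (y * b') * c = y := by
            calc (y * b') * c = ((s * c) * b') * c := by rw [hs]
            _ = s * (c * b' * c) := by simp only [mul_assoc]
            _ = s * c := by rw [hb']
            _ = y := hs
          have hd2D : y * b' ∈ D := by
            refine squeeze y (y * b') y hy hy ?_ ?_
            · exact (mem_pid_iff y (y * b')).mpr ⟨1, ↑b', by rw [one_mul, ← WithOne.coe_mul]⟩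
            · exact (mem_pid_iff (y * b') y).mpr ⟨1, ↑c, by rw [one_mul, ← WithOne.coe_mul, hd2c]⟩
          have hmm := (hcl _ step1 (some ⟨y * b', hd2D⟩)).1
          have heq : pfMul D (some ⟨y * b', hd2D⟩) (some ⟨c, hcD⟩) = some ⟨y, hy⟩ := by
            have hin : (y * b' : S) * c ∈ D := by rw [hd2c]; exact hy
            rw [pf_some, dif_pos hin]
            exact congrArg some (Subtype.ext hd2c)
          rwa [heq] at hmm
      apply Set.eq_univ_of_forall
      rintro (_ | ⟨y, hy⟩)
      · exact hnone
      · exact main y hy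
  · -- primitive idempotent
    obtain ⟨ε, hεε, hεD, hmin⟩ := exists_min_idem (fun f => f ∈ D) ⟨e, he, heD⟩
    have hεεD : (ε : S) * ε ∈ D := by rw [hεε]; exact hεD
    refine ⟨some ⟨ε, hεD⟩, ?_, Option.some_ne_none _, ?_⟩
    · rw [pf_some, dif_pos hεεD]
      exact congrArg some (Subtype.ext hεε)
    · rintro (_ | ⟨f, hf⟩) hφφ hφne hεφ hφε
      · exact absurd rfl hφne
      · -- extract the S-level equations
        have hff : f * f = f := by
          by_cases hin : f * f ∈ D
          · rw [pf_some, dif_pos hin] at hφφ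
            exact congrArg Subtype.val (Option.some_injective _ hφφ)
          · rw [pf_some, dif_neg hin] at hφφ
            exact absurd hφφ.symm (Option.some_ne_none _)
        have hef : ε * f = f := by
          by_cases hin : ε * f ∈ D
          · rw [pf_some, dif_pos hin] at hεφ
            exact congrArg Subtype.val (Option.some_injective _ hεφ)
          · rw [pf_some, dif_neg hin] at hεφ
            exact absurd hεφ.symm (Option.some_ne_none _)
        have hfe : f * ε = f := by
          by_cases hin : f * ε ∈ D
          · rw [pf_some, dif_pos hin] at hφε
            exact congrArg Subtype.val (Option.some_injective _ hφε)
          · rw [pf_some, dif_neg hin] at hφε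
            exact absurd hφε.symm (Option.some_ne_none _)
        have := hmin f hff hf hfe hef
        exact congrArg some (Subtype.ext this)
end

section
/- Let w = p₁p₂⋯pₘ = q₁q₂⋯q_s be two minimal r-factorisations of a word w ∈ E⁺, with coordinates (1, α₂, …, αₘ) and (1, β₂, …, β_s) respectively. Suppose for each factor a seed has been fixed: a seed eᵢ of pᵢ at position γᵢ in w (1 ≤ i ≤ m) and a seed fⱼ of qⱼ at position δⱼ in w (1 ≤ j ≤ s), so that 1 ≤ γ₁ < α₂ ≤ γ₂ < ⋯ < αₘ ≤ γₘ ≤ |w| and 1 ≤ δ₁ < β₂ ≤ δ₂ < ⋯ < β_s ≤ δ_s ≤ |w|. Then m = s, p̄ᵢ 𝓓 q̄ᵢ in IG(E) for all 1 ≤ i ≤ m, and the positions interlace: max(γᵢ, δᵢ) < min(αᵢ₊₁, βᵢ₊₁) and max(αᵢ₊₁, βᵢ₊₁) ≤ min(γᵢ₊₁, δᵢ₊₁) for all 1 ≤ i < m. Moreover p̄₁ 𝓡 q̄₁ and p̄ₘ 𝓛 q̄ₘ. -/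
/-!
Write `c x y` for the element of IG(E) represented by the letters of `w` in positions
`x, …, y - 1`. If factor `i` has its seed at `g`, the prefix `c x (g + 1)` of any suffix of the
factor is `𝓛`-related to the seed and the suffix `c g y` of any prefix is `𝓡`-related to it.
Consequently a segment starting in factor `i` no later than its seed and ending in factor `j ≥ i`
no earlier than its seed is `𝓓`-related to the segment between the two seeds: it is regular when
`i = j`, and not regular when `i < j` because it is then `𝓓`-related to `pᵢ ⋯ pⱼ`.

Testing segments between seeds of the two factorisations against these two facts shows, by
induction on `i`, that the `i`-th seed of each factorisation lies in the `i`-th factor of the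
other; the one configuration not excluded directly propagates to ever larger seeds and so cannot
occur. This gives `m = s` and the interlacing, and moving the ends of segments across seeds gives
the Green relations between the factors.
-/

section GreenRelations

variable {T : Type*} [Semigroup T] {a b c : T}

theorem GreenR.refl (a : T) : GreenR a a := Or.inl rfl

theorem GreenR.symm (h : GreenR a b) : GreenR b a := by
  rcases h with rfl | ⟨x, y, hx, hy⟩
  · exact .refl a
  · exact Or.inr ⟨y, x, hy, hx⟩

theorem GreenR.trans (h : GreenR a b) (h' : GreenR b c) : GreenR a c := by
  rcases h with rfl | ⟨x, y, hx, hy⟩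
  · exact h'
  rcases h' with rfl | ⟨x', y', hx', hy'⟩
  · exact Or.inr ⟨x, y, hx, hy⟩
  · exact Or.inr ⟨x * x', y' * y, by rw [← mul_assoc, hx, hx'], by rw [← mul_assoc, hy', hy]⟩

theorem GreenL.refl (a : T) : GreenL a a := Or.inl rfl

theorem GreenL.symm (h : GreenL a b) : GreenL b a := by
  rcases h with rfl | ⟨x, y, hx, hy⟩
  · exact .refl a
  · exact Or.inr ⟨y, x, hy, hx⟩

theorem GreenL.trans (h : GreenL a b) (h' : GreenL b c) : GreenL a c := by
  rcases h with rfl | ⟨x, y, hx, hy⟩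
  · exact h'
  rcases h' with rfl | ⟨x', y', hx', hy'⟩
  · exact Or.inr ⟨x, y, hx, hy⟩
  · exact Or.inr ⟨x' * x, y * y', by rw [mul_assoc, hx, hx'], by rw [mul_assoc, hy', hy]⟩

theorem GreenR.mul_left (h : GreenR a b) (z : T) : GreenR (z * a) (z * b) := by
  rcases h with rfl | ⟨x, y, hx, hy⟩
  · exact .refl _
  · exact Or.inr ⟨x, y, by rw [mul_assoc, hx], by rw [mul_assoc, hy]⟩

theorem GreenL.mul_right (h : GreenL a b) (z : T) : GreenL (a * z) (b * z) := by
  rcases h with rfl | ⟨x, y, hx, hy⟩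
  · exact .refl _
  · exact Or.inr ⟨x, y, by rw [← mul_assoc, hx], by rw [← mul_assoc, hy]⟩

theorem GreenR.exists_mul_eq_of_mul_self (he : a * a = a) (h : GreenR a b) :
    ∃ y, b * y = a := by
  rcases h with rfl | ⟨-, y, -, hy⟩
  exacts [⟨a, he⟩, ⟨y, hy⟩]

theorem GreenL.exists_mul_eq_of_mul_self (he : b * b = b) (h : GreenL a b) :
    ∃ x, x * a = b := by
  rcases h with rfl | ⟨x, -, hx, -⟩
  exacts [⟨a, he⟩, ⟨x, hx⟩]

theorem isRegularElem_of_mul_self (he : a * a = a) : IsRegularElem a := ⟨a, by rw [he, he]⟩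

theorem GreenR.isRegularElem_of_right (h : GreenR a b) (hb : IsRegularElem b) :
    IsRegularElem a := by
  rcases h with rfl | ⟨x, y, hx, hy⟩
  · exact hb
  obtain ⟨u, hu⟩ := hb
  refine ⟨x * u, ?_⟩
  calc a * (x * u) * a = a * x * u * (b * y) := by rw [hy]; simp only [mul_assoc]
    _ = b * u * b * y := by rw [hx]; simp only [mul_assoc]
    _ = a := by rw [hu, hy]

theorem GreenL.isRegularElem_of_right (h : GreenL a b) (hb : IsRegularElem b) :
    IsRegularElem a := by
  rcases h with rfl | ⟨x, y, hx, hy⟩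
  · exact hb
  obtain ⟨u, hu⟩ := hb
  refine ⟨u * x, ?_⟩
  calc a * (u * x) * a = y * b * u * (x * a) := by rw [hy]; simp only [mul_assoc]
    _ = y * (b * u * b) := by rw [hx]; simp only [mul_assoc]
    _ = a := by rw [hu, hy]

theorem GreenD.isRegularElem_iff (h : GreenD a b) : IsRegularElem a ↔ IsRegularElem b := by
  obtain ⟨d, hR, hL⟩ := h
  exact ⟨fun ha => hL.symm.isRegularElem_of_right (hR.symm.isRegularElem_of_right ha),
    fun hb => hR.isRegularElem_of_right (hL.isRegularElem_of_right hb)⟩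

/-- `𝓛 ∘ 𝓡 ⊆ 𝓡 ∘ 𝓛`, which makes `𝓓 = 𝓡 ∘ 𝓛` an equivalence. -/
theorem GreenL.exists_greenR_greenL (h : GreenL a b) (h' : GreenR b c) :
    ∃ d, GreenR a d ∧ GreenL d c := by
  rcases h with rfl | ⟨x, y, hx, hy⟩
  · exact ⟨c, h', .refl c⟩
  rcases h' with rfl | ⟨x', y', hx', hy'⟩
  · exact ⟨a, .refl a, Or.inr ⟨x, y, hx, hy⟩⟩
  refine ⟨a * x', Or.inr ⟨x', y', rfl, ?_⟩, Or.inr ⟨x, y, ?_, ?_⟩⟩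
  · rw [← hy, mul_assoc, mul_assoc, ← mul_assoc b, hx', hy']
  · rw [← mul_assoc, hx, hx']
  · rw [← hx', ← hy, mul_assoc]

theorem GreenD.symm (h : GreenD a b) : GreenD b a := by
  obtain ⟨d, hR, hL⟩ := h
  exact hL.symm.exists_greenR_greenL hR.symm

theorem GreenD.trans (h : GreenD a b) (h' : GreenD b c) : GreenD a c := by
  obtain ⟨d, hR, hL⟩ := h
  obtain ⟨d', hR', hL'⟩ := h'
  obtain ⟨d'', hR'', hL''⟩ := hL.exists_greenR_greenL hR'
  exact ⟨d'', hR.trans hR'', hL''.trans hL'⟩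

end GreenRelations

section Segments

variable {T : Type*} [Semigroup T] {c : ℕ → ℕ → T}

/-- `c x y` stands for the product of the letters in positions `x, …, y - 1` of a word. -/
def IsSegmentProduct (c : ℕ → ℕ → T) : Prop :=
  ∀ ⦃x y z : ℕ⦄, x < y → y < z → c x y * c y z = c x z

namespace IsSegmentProduct

theorem greenL_extend (hc : IsSegmentProduct c) {x x' y z : ℕ} (hx : x < y) (hx' : x' < y)
    (hyz : y ≤ z) (h : GreenL (c x y) (c x' y)) : GreenL (c x z) (c x' z) := by
  rcases hyz.lt_or_eq with hyz | rfl
  · rw [← hc hx hyz, ← hc hx' hyz]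
    exact h.mul_right _
  · exact h

theorem greenR_extend (hc : IsSegmentProduct c) {x y z z' : ℕ} (hxy : x ≤ y) (hz : y < z)
    (hz' : y < z') (h : GreenR (c y z) (c y z')) : GreenR (c x z) (c x z') := by
  rcases hxy.lt_or_eq with hxy | rfl
  · rw [← hc hxy hz, ← hc hxy hz']
    exact h.mul_left _
  · exact h

theorem blockProd_eq (hc : IsSegmentProduct c) {a : ℕ → ℕ} (ha : Monotone a) {i : ℕ}
    (hlt : ∀ j, i ≤ j → a j < a (j + 1)) (k : ℕ) :
    blockProd (fun j => c (a j) (a (j + 1))) i k = c (a i) (a (i + k + 1)) := by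
  induction k with
  | zero => rfl
  | succ k ih =>
    rw [blockProd, ih, ← add_assoc, hc ((ha (by omega)).trans_lt (hlt (i + k) (by omega)))
      (hlt (i + k + 1) (by omega))]

end IsSegmentProduct

theorem blockProd_congr {p p' : ℕ → T} {i k : ℕ}
    (h : ∀ j, i ≤ j → j ≤ i + k → p j = p' j) : blockProd p i k = blockProd p' i k := by
  induction k with
  | zero => exact h i le_rfl (by omega)
  | succ k ih =>
    rw [blockProd, blockProd, ih fun j hj hj' => h j hj (by omega), h _ (by omega) le_rfl]

theorem withCtx_eq_leftCtx (u : Option T) (x : T) (v : Option T) :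
    withCtx u x v = leftCtx u (rightCtx x v) := by
  cases u <;> cases v <;> simp [withCtx, leftCtx, rightCtx, mul_assoc]

theorem withCtx_eq_rightCtx (u : Option T) (x : T) (v : Option T) :
    withCtx u x v = rightCtx (leftCtx u x) v := by
  cases u <;> cases v <;> rfl

/-- The abstract form of `SeedAt`: position `g` carries a seed of the segment `[a, b)`. -/
structure IsSegmentSeed (c : ℕ → ℕ → T) (a b g : ℕ) : Prop where
  le : a ≤ g
  lt : g < b
  mul_self : c g (g + 1) * c g (g + 1) = c g (g + 1)
  greenL : GreenL (c a (g + 1)) (c g (g + 1))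
  greenR : GreenR (c g (g + 1)) (c g b)

namespace IsSegmentSeed

variable {a b g x y : ℕ}

theorem greenL_of_le (hs : IsSegmentSeed c a b g) (hc : IsSegmentProduct c) (hx : a ≤ x)
    (hxg : x ≤ g) : GreenL (c x (g + 1)) (c g (g + 1)) := by
  rcases hxg.lt_or_eq with hxg | rfl
  · obtain ⟨u, hu⟩ := hs.greenL.exists_mul_eq_of_mul_self hs.mul_self
    obtain ⟨u', hu'⟩ : ∃ u', u' * c x (g + 1) = c g (g + 1) := by
      rcases hx.lt_or_eq with hx | rfl
      · exact ⟨u * c a x, by rw [mul_assoc, hc hx (by omega), hu]⟩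
      · exact ⟨u, hu⟩
    exact Or.inr ⟨u', c x g, hu', hc hxg (by omega)⟩
  · exact .refl _

theorem greenR_of_le (hs : IsSegmentSeed c a b g) (hc : IsSegmentProduct c) (hy : g < y)
    (hyb : y ≤ b) : GreenR (c g (g + 1)) (c g y) := by
  rcases (Nat.succ_le_of_lt hy).lt_or_eq with hy | rfl
  · obtain ⟨v, hv⟩ := hs.greenR.exists_mul_eq_of_mul_self hs.mul_self
    obtain ⟨v', hv'⟩ : ∃ v', c g y * v' = c g (g + 1) := by
      rcases hyb.lt_or_eq with hyb | rfl
      · exact ⟨c y b * v, by rw [← mul_assoc, hc (by omega) hyb, hv]⟩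
      · exact ⟨v, hv⟩
    exact Or.inr ⟨c (g + 1) y, v', hc (by omega) hy, hv'⟩
  · exact .refl _

theorem greenL_cut (hs : IsSegmentSeed c a b g) (hc : IsSegmentProduct c) (hx : a ≤ x)
    (hxg : x ≤ g) (hy : g < y) : GreenL (c x y) (c g y) :=
  hc.greenL_extend (by omega) (by omega) hy (hs.greenL_of_le hc hx hxg)

theorem greenR_cut (hs : IsSegmentSeed c a b g) (hc : IsSegmentProduct c) (hxg : x ≤ g)
    (hy : g < y) (hyb : y ≤ b) : GreenR (c x y) (c x (g + 1)) :=
  hc.greenR_extend hxg hy (by omega) (hs.greenR_of_le hc hy hyb).symm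

end IsSegmentSeed

end Segments

section SeededFactorisations

variable {T : Type*} [Semigroup T]

/-- Factor `i` is the segment `[coord i, coord (i + 1))` of `[1, n + 1)`, with its seed at
position `seed i`; `coord` and `seed` are the `α` and `γ` of the statement. -/
structure SeededMinFact (c : ℕ → ℕ → T) (n : ℕ) where
  m : ℕ
  coord : ℕ → ℕ
  seed : ℕ → ℕ
  isSegmentProduct : IsSegmentProduct c
  one_le_m : 1 ≤ m
  coord_one : coord 1 = 1
  coord_last : coord (m + 1) = n + 1
  monotone_coord : Monotone coord
  isSegmentSeed : ∀ i, 1 ≤ i → i ≤ m → IsSegmentSeed c (coord i) (coord (i + 1)) (seed i)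
  not_isRegularElem : ∀ i j, 1 ≤ i → i < j → j ≤ m → ¬ IsRegularElem (c (coord i) (coord (j + 1)))

namespace SeededMinFact

variable {c : ℕ → ℕ → T} {n : ℕ} (P Q : SeededMinFact c n) {i j x y : ℕ}

def factor (i : ℕ) : T := c (P.coord i) (P.coord (i + 1))

theorem coord_le_seed (hi : 1 ≤ i) (him : i ≤ P.m) : P.coord i ≤ P.seed i :=
  (P.isSegmentSeed i hi him).le

theorem seed_lt_coord (hi : 1 ≤ i) (him : i ≤ P.m) : P.seed i < P.coord (i + 1) :=
  (P.isSegmentSeed i hi him).lt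

theorem one_le_seed (hi : 1 ≤ i) (him : i ≤ P.m) : 1 ≤ P.seed i :=
  P.coord_one ▸ (P.monotone_coord hi).trans (P.coord_le_seed hi him)

theorem seed_le (hi : 1 ≤ i) (him : i ≤ P.m) : P.seed i ≤ n := by
  have := P.seed_lt_coord hi him
  have := P.monotone_coord (show i + 1 ≤ P.m + 1 by omega)
  have := P.coord_last
  omega

theorem seed_lt_seed (hi : 1 ≤ i) (hij : i < j) (hjm : j ≤ P.m) : P.seed i < P.seed j :=
  (P.seed_lt_coord hi (by omega)).trans_le
    ((P.monotone_coord hij).trans (P.coord_le_seed (by omega) hjm))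

theorem le_of_coord_le_of_lt_coord (hj : P.coord j ≤ x) (hi : x < P.coord (i + 1)) : j ≤ i :=
  Nat.lt_succ_iff.mp (P.monotone_coord.reflect_lt (hj.trans_lt hi))

theorem exists_mem_factor (hx : 1 ≤ x) (hxn : x ≤ n) :
    ∃ i, 1 ≤ i ∧ i ≤ P.m ∧ P.coord i ≤ x ∧ x < P.coord (i + 1) := by
  have h₁ : P.coord 1 ≤ x := by rw [P.coord_one]; exact hx
  refine ⟨Nat.findGreatest (P.coord · ≤ x) P.m, Nat.le_findGreatest P.one_le_m h₁,
    Nat.findGreatest_le _, Nat.findGreatest_spec (P := (P.coord · ≤ x)) P.one_le_m h₁, ?_⟩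
  by_contra! h
  rcases (Nat.findGreatest_le (P := (P.coord · ≤ x)) P.m).lt_or_eq with hlt | heq
  · exact Nat.findGreatest_is_greatest (Nat.lt_succ_self _) hlt h
  · rw [heq, P.coord_last] at h
    omega

theorem greenD_of_mem (hi : 1 ≤ i) (hij : i ≤ j) (hjm : j ≤ P.m) (hx : P.coord i ≤ x)
    (hxs : x ≤ P.seed i) (hy : P.seed j < y) (hy' : y ≤ P.coord (j + 1)) :
    GreenD (c x y) (c (P.seed i) (P.seed j + 1)) := by
  have hss : P.seed i ≤ P.seed j := by
    rcases hij.lt_or_eq with hij | rfl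
    exacts [(P.seed_lt_seed hi hij hjm).le, le_rfl]
  exact ⟨c x (P.seed j + 1),
    (P.isSegmentSeed j (by omega) hjm).greenR_cut P.isSegmentProduct (hxs.trans hss) hy hy',
    (P.isSegmentSeed i hi (by omega)).greenL_cut P.isSegmentProduct hx hxs (by omega)⟩

theorem isRegularElem_of_mem (hi : 1 ≤ i) (him : i ≤ P.m) (hx : P.coord i ≤ x)
    (hxs : x ≤ P.seed i) (hy : P.seed i ≤ y) (hy' : y < P.coord (i + 1)) :
    IsRegularElem (c x (y + 1)) :=
  (P.greenD_of_mem hi le_rfl him hx hxs (by omega) hy').isRegularElem_iff.mpr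
    (isRegularElem_of_mul_self (P.isSegmentSeed i hi him).mul_self)

theorem not_isRegularElem_of_mem (hi : 1 ≤ i) (hij : i < j) (hjm : j ≤ P.m)
    (hx : P.coord i ≤ x) (hxs : x ≤ P.seed i) (hy : P.seed j ≤ y) (hy' : y < P.coord (j + 1)) :
    ¬ IsRegularElem (c x (y + 1)) := fun h =>
  P.not_isRegularElem i j hi hij hjm <|
    (P.greenD_of_mem hi hij.le hjm le_rfl (P.coord_le_seed hi (by omega))
      (P.seed_lt_coord (by omega) hjm) le_rfl).isRegularElem_iff.mpr
    ((P.greenD_of_mem hi hij.le hjm hx hxs (by omega) hy').isRegularElem_iff.mp h)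

/-- Otherwise the configuration reproduces itself with `P` and `Q` exchanged and a larger seed
in place of `P.seed i₀`. -/
theorem not_zigzag (P Q : SeededMinFact c n) {i₀ j₀ i₁ : ℕ} (hi₀ : 1 ≤ i₀) (hi : i₀ < i₁)
    (hi₁ : i₁ ≤ P.m) (hj₀ : 1 ≤ j₀)
    (hj₀m : j₀ ≤ Q.m) (h₁ : Q.coord j₀ ≤ P.seed i₀) (h₂ : P.seed i₀ ≤ Q.seed j₀)
    (h₃ : P.coord i₁ ≤ Q.seed j₀) (h₄ : Q.seed j₀ ≤ P.seed i₁) : False := by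
  obtain ⟨j₁, hj₁, hj₁m, hlo, hhi⟩ :=
    Q.exists_mem_factor (P.one_le_seed (by omega) hi₁) (P.seed_le (by omega) hi₁)
  have hj : j₀ ≤ j₁ :=
    Q.le_of_coord_le_of_lt_coord ((Q.coord_le_seed hj₀ hj₀m).trans h₄) hhi
  rcases hj.lt_or_eq with hj | rfl
  · rcases le_or_gt (Q.seed j₁) (P.seed i₁) with h | h
    · exact Q.not_isRegularElem_of_mem hj₀ hj hj₁m (Q.coord_le_seed hj₀ hj₀m) le_rfl h hhi
        (P.isRegularElem_of_mem (by omega) hi₁ h₃ h₄ le_rfl (P.seed_lt_coord (by omega) hi₁))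
    · have := P.seed_lt_coord hi₀ (by omega)
      have := P.monotone_coord (show i₀ + 1 ≤ i₁ from hi)
      have := Q.seed_le hj₀ hj₀m
      exact not_zigzag Q P hj₀ hj hj₁m (by omega) hi₁ h₃ h₄ hlo h.le
  · exact P.not_isRegularElem_of_mem hi₀ hi hi₁ (P.coord_le_seed hi₀ (by omega)) le_rfl le_rfl
      (P.seed_lt_coord (by omega) hi₁) (Q.isRegularElem_of_mem hj₀ hj₀m h₁ h₂ h₄ hhi)
termination_by n - P.seed i₀

theorem seed_lt_coord_succ (hi : 1 ≤ i) (hiP : i ≤ P.m) (hiQ : i ≤ Q.m)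
    (h : Q.coord i ≤ P.seed i) : Q.seed i < P.coord (i + 1) := by
  by_contra! hcon
  obtain ⟨i₁, hi₁, hi₁m, hlo, hhi⟩ := P.exists_mem_factor (Q.one_le_seed hi hiQ) (Q.seed_le hi hiQ)
  have hii₁ : i < i₁ := P.le_of_coord_le_of_lt_coord hcon hhi
  have hPQ : P.seed i ≤ Q.seed i := (P.seed_lt_coord hi hiP).le.trans hcon
  rcases le_or_gt (Q.seed i) (P.seed i₁) with h' | h'
  · exact not_zigzag P Q hi hii₁ hi₁m hi hiQ h hPQ hlo h'
  · exact P.not_isRegularElem_of_mem hi hii₁ hi₁m (P.coord_le_seed hi hiP) le_rfl h'.le hhi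
      (Q.isRegularElem_of_mem hi hiQ h hPQ le_rfl (Q.seed_lt_coord hi hiQ))

theorem coord_succ_le_seed_succ (hi : 1 ≤ i) (hiP : i + 1 ≤ P.m) (hiQ : i ≤ Q.m)
    (hPQ : Q.coord i ≤ P.seed i) (hQP : P.coord i ≤ Q.seed i) (hlt : Q.seed i < P.coord (i + 1)) :
    Q.coord (i + 1) ≤ P.seed (i + 1) := by
  by_contra! hcon
  have := P.coord_le_seed hi (by omega)
  have := Q.coord_le_seed hi hiQ
  have := P.coord_le_seed (by omega) hiP
  exact P.not_isRegularElem_of_mem (x := min (P.seed i) (Q.seed i)) hi (lt_add_one i) hiP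
    (by omega) (min_le_left _ _) le_rfl (P.seed_lt_coord (by omega) hiP)
    (Q.isRegularElem_of_mem hi hiQ (by omega) (min_le_right _ _) (by omega) hcon)

theorem coord_le_seed_cross (hi : 1 ≤ i) (hiP : i ≤ P.m) (hiQ : i ≤ Q.m) :
    Q.coord i ≤ P.seed i ∧ P.coord i ≤ Q.seed i := by
  induction i, hi using Nat.le_induction with
  | base =>
    rw [P.coord_one, Q.coord_one]
    exact ⟨P.one_le_seed le_rfl hiP, Q.one_le_seed le_rfl hiQ⟩
  | succ i hi ih =>
    obtain ⟨hPQ, hQP⟩ := ih (by omega) (by omega)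
    exact ⟨P.coord_succ_le_seed_succ Q hi hiP (by omega) hPQ hQP
        (P.seed_lt_coord_succ Q hi (by omega) (by omega) hPQ),
      Q.coord_succ_le_seed_succ P hi hiQ (by omega) hQP hPQ
        (Q.seed_lt_coord_succ P hi (by omega) (by omega) hQP)⟩

theorem m_le : P.m ≤ Q.m := by
  by_contra! h
  have hQ := Q.one_le_m
  obtain ⟨hPQ, hQP⟩ := P.coord_le_seed_cross Q hQ h.le le_rfl
  have : Q.coord (Q.m + 1) ≤ P.seed (Q.m + 1) :=
    P.coord_succ_le_seed_succ Q hQ h le_rfl hPQ hQP (P.seed_lt_coord_succ Q hQ h.le le_rfl hPQ)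
  have : P.seed (Q.m + 1) ≤ n := P.seed_le (by omega) h
  have := Q.coord_last
  omega

theorem m_eq : P.m = Q.m := le_antisymm (P.m_le Q) (Q.m_le P)

theorem seed_mem_factor (hi : 1 ≤ i) (him : i ≤ P.m) :
    Q.coord i ≤ P.seed i ∧ P.seed i < Q.coord (i + 1) := by
  have hiQ : i ≤ Q.m := P.m_eq Q ▸ him
  obtain ⟨hPQ, hQP⟩ := P.coord_le_seed_cross Q hi him hiQ
  exact ⟨hPQ, Q.seed_lt_coord_succ P hi hiQ him hQP⟩

theorem interlacing (hi : 1 ≤ i) (him : i < P.m) :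
    max (P.seed i) (Q.seed i) < min (P.coord (i + 1)) (Q.coord (i + 1)) ∧
      max (P.coord (i + 1)) (Q.coord (i + 1)) ≤ min (P.seed (i + 1)) (Q.seed (i + 1)) := by
  have hiQ : i + 1 ≤ Q.m := P.m_eq Q ▸ him
  have h₁ := P.seed_mem_factor Q hi him.le
  have h₂ := Q.seed_mem_factor P hi (by omega)
  have h₃ := P.seed_mem_factor Q (Nat.le_add_left 1 i) him
  have h₄ := Q.seed_mem_factor P (Nat.le_add_left 1 i) hiQ
  have := P.seed_lt_coord hi him.le
  have := Q.seed_lt_coord hi (by omega)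
  have := P.coord_le_seed (Nat.le_add_left 1 i) him
  have := Q.coord_le_seed (Nat.le_add_left 1 i) hiQ
  omega

theorem greenD_factor_seed (hi : 1 ≤ i) (him : i ≤ P.m) :
    GreenD (P.factor i) (c (P.seed i) (P.seed i + 1)) :=
  P.greenD_of_mem hi le_rfl him le_rfl (P.coord_le_seed hi him) (P.seed_lt_coord hi him) le_rfl

theorem greenD_seed_of_le (hi : 1 ≤ i) (him : i ≤ P.m) (h : P.seed i ≤ Q.seed i) :
    GreenD (c (P.seed i) (P.seed i + 1)) (c (Q.seed i) (Q.seed i + 1)) :=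
  have hiQ : i ≤ Q.m := P.m_eq Q ▸ him
  (P.greenD_of_mem (x := P.seed i) (y := Q.seed i + 1) hi le_rfl him
      (P.coord_le_seed hi him) le_rfl (by omega) (Q.seed_mem_factor P hi hiQ).2).symm.trans
    (Q.greenD_of_mem hi le_rfl hiQ (P.seed_mem_factor Q hi him).1 h (lt_add_one _)
      (Q.seed_lt_coord hi hiQ))

theorem greenD_factor (hi : 1 ≤ i) (him : i ≤ P.m) : GreenD (P.factor i) (Q.factor i) := by
  have hiQ : i ≤ Q.m := P.m_eq Q ▸ him
  have hseed : GreenD (c (P.seed i) (P.seed i + 1)) (c (Q.seed i) (Q.seed i + 1)) := by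
    rcases le_total (P.seed i) (Q.seed i) with h | h
    exacts [P.greenD_seed_of_le Q hi him h, (Q.greenD_seed_of_le P hi hiQ h).symm]
  exact ((P.greenD_factor_seed hi him).trans hseed).trans (Q.greenD_factor_seed hi hiQ).symm

theorem greenR_factor_of_lt (hi : 1 ≤ i) (him : i ≤ P.m) (hy : P.seed i < y)
    (hy' : y ≤ P.coord (i + 1)) : GreenR (P.factor i) (c (P.coord i) y) :=
  have hs := P.isSegmentSeed i hi him
  (hs.greenR_cut P.isSegmentProduct hs.le hs.lt le_rfl).trans
    (hs.greenR_cut P.isSegmentProduct hs.le hy hy').symm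

theorem greenL_factor_of_le (hi : 1 ≤ i) (him : i ≤ P.m) (hx : P.coord i ≤ x)
    (hxs : x ≤ P.seed i) : GreenL (P.factor i) (c x (P.coord (i + 1))) :=
  have hs := P.isSegmentSeed i hi him
  (hs.greenL_cut P.isSegmentProduct le_rfl hs.le hs.lt).trans
    (hs.greenL_cut P.isSegmentProduct hx hxs hs.lt).symm

theorem greenR_factor_one : GreenR (P.factor 1) (Q.factor 1) := by
  have hP := P.one_le_m
  have hQ := Q.one_le_m
  have := P.seed_lt_coord le_rfl hP
  have := Q.seed_lt_coord le_rfl hQ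
  have := (P.seed_mem_factor Q le_rfl hP).2
  have := (Q.seed_mem_factor P le_rfl hQ).2
  have hP' := P.greenR_factor_of_lt le_rfl hP (y := max (P.seed 1) (Q.seed 1) + 1) (by omega)
    (by omega)
  have hQ' := Q.greenR_factor_of_lt le_rfl hQ (y := max (P.seed 1) (Q.seed 1) + 1) (by omega)
    (by omega)
  rw [P.coord_one] at hP'
  rw [Q.coord_one] at hQ'
  exact hP'.trans hQ'.symm

theorem greenL_factor_last : GreenL (P.factor P.m) (Q.factor Q.m) := by
  have hP := P.one_le_m
  have hms := P.m_eq Q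
  have := P.coord_le_seed hP le_rfl
  have := Q.coord_le_seed hP hms.le
  have := (P.seed_mem_factor Q hP le_rfl).1
  have := (Q.seed_mem_factor P hP hms.le).1
  have hP' := P.greenL_factor_of_le hP le_rfl (x := min (P.seed P.m) (Q.seed P.m)) (by omega)
    (min_le_left _ _)
  have hQ' := Q.greenL_factor_of_le hP hms.le (x := min (P.seed P.m) (Q.seed P.m)) (by omega)
    (min_le_right _ _)
  rw [P.coord_last] at hP'
  rw [hms, Q.coord_last, ← hms] at hQ'
  rw [← hms]
  exact hP'.trans hQ'.symm

end SeededMinFact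

end SeededFactorisations

section Words

variable {S : Type*} [Semigroup S]

theorem igBar_mul (u v : FreeSemigroup (IdemE S)) : igBar (u * v) = igBar u * igBar v := rfl

theorem igBar_of_mul_self (e : IdemE S) :
    igBar (FreeSemigroup.of e) * igBar (FreeSemigroup.of e) = igBar (FreeSemigroup.of e) :=
  (Con.eq _).mpr (ConGen.Rel.of _ _ ⟨e, e, e, Or.inl e.prop, e.prop.symm, rfl, rfl⟩)

theorem wordList_mul (u v : FreeSemigroup (IdemE S)) :
    wordList (u * v) = wordList u ++ wordList v := rfl

theorem wordList_injective : Function.Injective (wordList (S := S)) := by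
  rintro ⟨x, l⟩ ⟨x', l'⟩ h
  obtain ⟨rfl, rfl⟩ := List.cons.inj h
  rfl

theorem wlen_mul (u v : FreeSemigroup (IdemE S)) : wlen (u * v) = wlen u + wlen v := by
  simp only [wlen, wordList_mul, List.length_append]

theorem wlen_pos (u : FreeSemigroup (IdemE S)) : 0 < wlen u := Nat.succ_pos _

theorem wlen_of (e : IdemE S) : wlen (FreeSemigroup.of e) = 1 := rfl

theorem wlen_leftCtx (u : Option (FreeSemigroup (IdemE S))) (x : FreeSemigroup (IdemE S)) :
    wlen (leftCtx u x) = olen u + wlen x := by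
  cases u
  · simp [leftCtx, olen]
  · simp [leftCtx, olen, wlen_mul]

theorem wlen_rightCtx (x : FreeSemigroup (IdemE S)) (v : Option (FreeSemigroup (IdemE S))) :
    wlen (rightCtx x v) = wlen x + olen v := by
  cases v
  · simp [rightCtx, olen]
  · simp [rightCtx, olen, wlen_mul]

theorem eq_and_eq_of_mul_eq_mul {u v u' v' : FreeSemigroup (IdemE S)} (h : u * v = u' * v')
    (hv : wlen v = wlen v') : u = u' ∧ v = v' := by
  have := congrArg wordList h
  rw [wordList_mul, wordList_mul] at this
  obtain ⟨hu, hv⟩ := List.append_inj' this hv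
  exact ⟨wordList_injective hu, wordList_injective hv⟩

theorem eq_of_blockProd_eq {p p' : ℕ → FreeSemigroup (IdemE S)} {i k : ℕ}
    (hlen : ∀ j, i ≤ j → j ≤ i + k → wlen (p j) = wlen (p' j))
    (h : blockProd p i k = blockProd p' i k) : ∀ j, i ≤ j → j ≤ i + k → p j = p' j := by
  induction k with
  | zero =>
    intro j hj hj'
    obtain rfl : j = i := by omega
    exact h
  | succ k ih =>
    obtain ⟨hinit, hlast⟩ := eq_and_eq_of_mul_eq_mul h (hlen _ (by omega) le_rfl)
    intro j hj hj'
    rcases hj'.lt_or_eq with hj' | rfl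
    exacts [ih (fun l hl hl' => hlen l hl (by omega)) hinit j hj (by omega), hlast]

variable (w : FreeSemigroup (IdemE S))

/-- The letter of `w` at the 1-based position `k` (junk beyond the end). -/
def letter (k : ℕ) : IdemE S := (wordList w).getD (k - 1) w.head

/-- The letters of `w` at the positions `x, …, y - 1` (a single junk letter if `y ≤ x`). -/
def subword (x y : ℕ) : FreeSemigroup (IdemE S) :=
  ⟨letter w x, (List.range' (x + 1) (y - x - 1)).map (letter w)⟩

def segBar (x y : ℕ) : IG S := igBar (subword w x y)

theorem isSegmentProduct_subword : IsSegmentProduct (subword w) := by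
  intro x y z hxy hyz
  have hrange : List.range' (x + 1) (y - x - 1) ++ y :: List.range' (y + 1) (z - y - 1) =
      List.range' (x + 1) (z - x - 1) := by
    rw [← List.range'_succ, show z - y - 1 + 1 = z - y by omega]
    have := List.range'_append (s := x + 1) (m := y - x - 1) (n := z - y) (step := 1)
    rwa [show x + 1 + 1 * (y - x - 1) = y by omega, show y - x - 1 + (z - y) = z - x - 1 by omega]
      at this
  rw [subword, subword, FreeSemigroup.mk_mul_mk, ← List.map_cons, ← List.map_append, hrange,
    subword]

theorem isSegmentProduct_segBar : IsSegmentProduct (segBar w) := fun x y z hxy hyz => by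
  rw [segBar, segBar, ← igBar_mul, isSegmentProduct_subword w hxy hyz, segBar]

theorem wordList_subword {x y : ℕ} (h : x < y) :
    wordList (subword w x y) = (List.range' x (y - x)).map (letter w) := by
  rw [show y - x = y - x - 1 + 1 by omega, List.range'_succ]
  rfl

theorem wlen_subword {x y : ℕ} (h : x < y) : wlen (subword w x y) = y - x := by
  rw [wlen, wordList_subword w h, List.length_map, List.length_range']

theorem subword_one_wlen : subword w 1 (wlen w + 1) = w := by
  apply wordList_injective
  rw [wordList_subword w (by simp [wlen_pos]), Nat.add_sub_cancel]
  refine List.ext_getElem (by simp [wlen]) fun j _ hj => ?_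
  rw [List.getElem_map, List.getElem_range', letter, show 1 + 1 * j - 1 = j by omega]
  exact List.getD_eq_getElem _ _ hj

theorem subword_eq_of_eq_mul {x z : ℕ} {u v : FreeSemigroup (IdemE S)} (h : subword w x z = u * v)
    (hxz : x < z) : subword w x (x + wlen u) = u ∧ subword w (x + wlen u) z = v := by
  have hlen := wlen_subword w hxz
  rw [h, wlen_mul] at hlen
  have := wlen_pos u
  have := wlen_pos v
  rw [← isSegmentProduct_subword w (by omega : x < x + wlen u) (by omega : x + wlen u < z)] at h
  exact eq_and_eq_of_mul_eq_mul h (by rw [wlen_subword w (by omega)]; omega)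

theorem subword_eq_of_eq_leftCtx {x z : ℕ} {u : Option (FreeSemigroup (IdemE S))}
    {t : FreeSemigroup (IdemE S)} (h : subword w x z = leftCtx u t) (hxz : x < z) :
    subword w (x + olen u) z = t := by
  cases u with
  | none => exact h
  | some u => exact (subword_eq_of_eq_mul w h hxz).2

theorem subword_eq_of_eq_rightCtx {x z : ℕ} {t : FreeSemigroup (IdemE S)}
    {v : Option (FreeSemigroup (IdemE S))} (h : subword w x z = rightCtx t v) (hxz : x < z) :
    subword w x (x + wlen t) = t := by
  cases v with
  | none =>
    have hlen := wlen_subword w hxz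
    rw [h] at hlen
    rwa [show x + wlen t = z by simp only [rightCtx] at hlen; omega]
  | some v => exact (subword_eq_of_eq_mul w h hxz).1

theorem isSegmentSeed_of_seedAt {a b k : ℕ} {e : IdemE S} (hs : SeedAt (subword w a b) e k)
    (hab : a < b) : IsSegmentSeed (segBar w) a b (a + k - 1) := by
  obtain ⟨u, v, hw, rfl, hL, hR⟩ := hs
  have hlen := wlen_subword w hab
  rw [hw, withCtx_eq_leftCtx, wlen_leftCtx, wlen_rightCtx, wlen_of] at hlen
  have hsuf := subword_eq_of_eq_leftCtx w (hw.trans (withCtx_eq_leftCtx ..)) hab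
  have hpre := subword_eq_of_eq_rightCtx w (hw.trans (withCtx_eq_rightCtx ..)) hab
  have hseed := subword_eq_of_eq_rightCtx w hsuf (by omega)
  rw [wlen_of] at hseed
  rw [wlen_leftCtx, wlen_of, ← add_assoc] at hpre
  rw [show a + (olen u + 1) - 1 = a + olen u by omega]
  refine ⟨by omega, by omega, ?_, ?_, ?_⟩
  · rw [segBar, hseed]
    exact igBar_of_mul_self e
  · rwa [segBar, segBar, hseed, hpre]
  · rwa [segBar, segBar, hseed, hsuf]

end Words

section Factorisations

variable {S : Type*} [Semigroup S] {w : FreeSemigroup (IdemE S)} {m i j : ℕ}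
  {p : ℕ → FreeSemigroup (IdemE S)}

theorem wcoord_one (p : ℕ → FreeSemigroup (IdemE S)) : wcoord p 1 = 1 := rfl

theorem wcoord_succ (p : ℕ → FreeSemigroup (IdemE S)) (hi : 1 ≤ i) :
    wcoord p (i + 1) = wcoord p i + wlen (p i) := by
  rw [wcoord, wcoord, Finset.sum_Ico_succ_top hi, add_assoc]

theorem wcoord_lt_succ (p : ℕ → FreeSemigroup (IdemE S)) (hi : 1 ≤ i) :
    wcoord p i < wcoord p (i + 1) :=
  (wcoord_succ p hi).symm ▸ Nat.lt_add_of_pos_right (wlen_pos _)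

theorem monotone_wcoord (p : ℕ → FreeSemigroup (IdemE S)) : Monotone (wcoord p) :=
  fun _ _ h => Nat.add_le_add_left
    (Finset.sum_le_sum_of_subset (Finset.Ico_subset_Ico_right h)) 1

theorem wcoord_add_two (p : ℕ → FreeSemigroup (IdemE S)) (k : ℕ) :
    wcoord p (k + 2) = wlen (blockProd p 1 k) + 1 := by
  induction k with
  | zero => rw [wcoord_succ p le_rfl, wcoord_one, blockProd, add_comm]
  | succ k ih =>
    rw [wcoord_succ p (by omega), ih, blockProd, wlen_mul, show 1 + (k + 1) = k + 2 by omega]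
    omega

theorem IsRFact.wcoord_last (hp : IsRFact w m p) : wcoord p (m + 1) = wlen w + 1 := by
  obtain ⟨hm, hw, -⟩ := hp
  rw [← hw, ← wcoord_add_two, show m - 1 + 2 = m + 1 by omega]

theorem IsRFact.subword_wcoord (hp : IsRFact w m p) (hi : 1 ≤ i) (him : i ≤ m) :
    subword w (wcoord p i) (wcoord p (i + 1)) = p i := by
  have hblock : blockProd (fun j => subword w (wcoord p j) (wcoord p (j + 1))) 1 (m - 1) =
      blockProd p 1 (m - 1) := by
    rw [(isSegmentProduct_subword w).blockProd_eq (monotone_wcoord p)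
      fun j hj => wcoord_lt_succ p hj, show 1 + (m - 1) + 1 = m + 1 by omega, hp.wcoord_last,
      wcoord_one, subword_one_wlen, hp.2.1]
  refine eq_of_blockProd_eq (fun j hj _ => ?_) hblock i hi (by omega)
  rw [wlen_subword w (wcoord_lt_succ p hj), wcoord_succ p hj]
  omega

theorem IsRFact.blockProd_eq_subword (hp : IsRFact w m p) (hi : 1 ≤ i) (hij : i ≤ j)
    (hjm : j ≤ m) : blockProd p i (j - i) = subword w (wcoord p i) (wcoord p (j + 1)) := by
  rw [blockProd_congr fun l hl hl' => (hp.subword_wcoord (by omega) (by omega)).symm,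
    (isSegmentProduct_subword w).blockProd_eq (monotone_wcoord p)
      fun l hl => wcoord_lt_succ p (by omega), show i + (j - i) + 1 = j + 1 by omega]

variable {e : ℕ → IdemE S} {γ : ℕ → ℕ}

def SeededMinFact.ofIsMinRFact (hp : IsMinRFact w m p)
    (hseed : ∀ i, 1 ≤ i → i ≤ m → ∃ k, SeedAt (p i) (e i) k ∧ γ i = wcoord p i - 1 + k) :
    SeededMinFact (segBar w) (wlen w) where
  m := m
  coord := wcoord p
  seed := γ
  isSegmentProduct := isSegmentProduct_segBar w
  one_le_m := hp.1.1
  coord_one := wcoord_one p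
  coord_last := hp.1.wcoord_last
  monotone_coord := monotone_wcoord p
  isSegmentSeed i hi him := by
    obtain ⟨k, hs, hk⟩ := hseed i hi him
    rw [← hp.1.subword_wcoord hi him] at hs
    have : 1 ≤ wcoord p i := Nat.le_add_right _ _
    rw [hk, show wcoord p i - 1 + k = wcoord p i + k - 1 by omega]
    exact isSegmentSeed_of_seedAt w hs (wcoord_lt_succ p hi)
  not_isRegularElem i j hi hij hjm := by
    have := hp.2 i j hi hij hjm
    rwa [hp.1.blockProd_eq_subword hi hij.le hjm] at this

theorem SeededMinFact.igBar_eq_factor (hp : IsMinRFact w m p)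
    (hseed : ∀ i, 1 ≤ i → i ≤ m → ∃ k, SeedAt (p i) (e i) k ∧ γ i = wcoord p i - 1 + k)
    (hi : 1 ≤ i) (him : i ≤ m) : igBar (p i) = (ofIsMinRFact hp hseed).factor i := by
  rw [← hp.1.subword_wcoord hi him]
  rfl

end Factorisations

theorem stmt3_general {S : Type*} [Semigroup S]
    (w : FreeSemigroup (IdemE S)) (m s : ℕ)
    (p q : ℕ → FreeSemigroup (IdemE S))
    (hp : IsMinRFact w m p) (hq : IsMinRFact w s q)
    (e f : ℕ → IdemE S) (γ δ : ℕ → ℕ)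
    -- a fixed seed `e i` of `p i`, at position `γ i` in `w`
    (hseedp : ∀ i, 1 ≤ i → i ≤ m →
      ∃ k, SeedAt (p i) (e i) k ∧ γ i = wcoord p i - 1 + k)
    -- a fixed seed `f j` of `q j`, at position `δ j` in `w`
    (hseedq : ∀ j, 1 ≤ j → j ≤ s →
      ∃ k, SeedAt (q j) (f j) k ∧ δ j = wcoord q j - 1 + k) :
    m = s ∧
    (∀ i, 1 ≤ i → i ≤ m → GreenD (igBar (p i)) (igBar (q i))) ∧
    -- the interlacing γᵢ, δᵢ < αᵢ₊₁, βᵢ₊₁ ≤ γᵢ₊₁, δᵢ₊₁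
    (∀ i, 1 ≤ i → i < m →
      max (γ i) (δ i) < min (wcoord p (i + 1)) (wcoord q (i + 1)) ∧
      max (wcoord p (i + 1)) (wcoord q (i + 1)) ≤ min (γ (i + 1)) (δ (i + 1))) ∧
    GreenR (igBar (p 1)) (igBar (q 1)) ∧ GreenL (igBar (p m)) (igBar (q m)) := by
  let P := SeededMinFact.ofIsMinRFact hp hseedp
  let Q := SeededMinFact.ofIsMinRFact hq hseedq
  have hms : m = s := P.m_eq Q
  have hm : 1 ≤ m := hp.1.1
  have hbar : ∀ i, 1 ≤ i → i ≤ m → igBar (p i) = P.factor i ∧ igBar (q i) = Q.factor i :=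
    fun i hi him => ⟨SeededMinFact.igBar_eq_factor hp hseedp hi him,
      SeededMinFact.igBar_eq_factor hq hseedq hi (hms ▸ him)⟩
  refine ⟨hms, fun i hi him => ?_, fun i hi him => P.interlacing Q hi him, ?_, ?_⟩
  · rw [(hbar i hi him).1, (hbar i hi him).2]
    exact P.greenD_factor Q hi him
  · rw [(hbar 1 le_rfl hm).1, (hbar 1 le_rfl hm).2]
    exact P.greenR_factor_one Q
  · rw [(hbar m hm le_rfl).1, (hbar m hm le_rfl).2]
    have h : GreenL (P.factor m) (Q.factor s) := P.greenL_factor_last Q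
    rwa [← hms] at h

theorem stmt3 {S : Type*} [Semigroup S] [Finite (IdemE S)]
    (w : FreeSemigroup (IdemE S)) (m s : ℕ)
    (p q : ℕ → FreeSemigroup (IdemE S))
    (hp : IsMinRFact w m p) (hq : IsMinRFact w s q)
    (e f : ℕ → IdemE S) (γ δ : ℕ → ℕ)
    -- a fixed seed `e i` of `p i`, at position `γ i` in `w`
    (hseedp : ∀ i, 1 ≤ i → i ≤ m →
      ∃ k, SeedAt (p i) (e i) k ∧ γ i = wcoord p i - 1 + k)
    -- a fixed seed `f j` of `q j`, at position `δ j` in `w`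
    (hseedq : ∀ j, 1 ≤ j → j ≤ s →
      ∃ k, SeedAt (q j) (f j) k ∧ δ j = wcoord q j - 1 + k)
    -- 1 ≤ γ₁ < α₂ ≤ γ₂ < ⋯ < αₘ ≤ γₘ ≤ |w|
    (hchainp : 1 ≤ γ 1 ∧
      (∀ i, 1 ≤ i → i < m → γ i < wcoord p (i + 1) ∧ wcoord p (i + 1) ≤ γ (i + 1)) ∧
      γ m ≤ wlen w)
    -- 1 ≤ δ₁ < β₂ ≤ δ₂ < ⋯ < β_s ≤ δ_s ≤ |w|
    (hchainq : 1 ≤ δ 1 ∧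
      (∀ j, 1 ≤ j → j < s → δ j < wcoord q (j + 1) ∧ wcoord q (j + 1) ≤ δ (j + 1)) ∧
      δ s ≤ wlen w) :
    m = s ∧
    (∀ i, 1 ≤ i → i ≤ m → GreenD (igBar (p i)) (igBar (q i))) ∧
    -- the interlacing γᵢ, δᵢ < αᵢ₊₁, βᵢ₊₁ ≤ γᵢ₊₁, δᵢ₊₁
    (∀ i, 1 ≤ i → i < m →
      max (γ i) (δ i) < min (wcoord p (i + 1)) (wcoord q (i + 1)) ∧
      max (wcoord p (i + 1)) (wcoord q (i + 1)) ≤ min (γ (i + 1)) (δ (i + 1))) ∧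
    GreenR (igBar (p 1)) (igBar (q 1)) ∧ GreenL (igBar (p m)) (igBar (q m)) :=
  stmt3_general w m s p q hp hq e f γ δ hseedp hseedq
end

section
/- Let G be a finite group and F a free group of finite rank, and let ρ be a rational subset of the direct product group G × F. Then for each g ∈ G, the set gρ = {w ∈ F : (g, w) ∈ ρ} is a rational subset of F. -/
open Pointwise

/-- The rational subsets of a monoid: the smallest collection of subsets containing
all finite subsets and closed under union, elementwise product, and the Kleene star
(the generated submonoid). -/
inductive IsRationalSubset {M : Type*} [Monoid M] : Set M → Prop
  | finite (A : Set M) (hA : A.Finite) : IsRationalSubset A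
  | union (A B : Set M) : IsRationalSubset A → IsRationalSubset B → IsRationalSubset (A ∪ B)
  | mul (A B : Set M) : IsRationalSubset A → IsRationalSubset B → IsRationalSubset (A * B)
  | star (A : Set M) : IsRationalSubset A → IsRationalSubset (Submonoid.closure A : Set M)

/-!
Induct on the rational expression for `ρ`. Finite sets and unions are immediate, and the fiber of
`A * B` over `g` is the finite union over `h : G` of (fiber of `A` over `h`) * (fiber of `B` over
`h⁻¹ * g`). For the star, read `A` as an automaton with state set `G` and a transition `a → b`
labelled `m` for each `(a⁻¹ * b, m) ∈ A`: apart from `1 ∈ A*`, the fiber of `A*` over `g` is the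
set of labels of paths from `1` to `g`. Kleene's algorithm (allow the finitely many states as
intermediate states one at a time) shows that these label sets are rational, with the fibers of
`A` as the one-step languages.
-/

namespace IsRationalSubset

variable {M : Type*} [Monoid M]

lemma iUnion {ι : Type*} [Finite ι] {f : ι → Set M} (hf : ∀ i, IsRationalSubset (f i)) :
    IsRationalSubset (⋃ i, f i) := by
  classical
  have := Fintype.ofFinite ι
  suffices ∀ s : Finset ι, IsRationalSubset (⋃ i ∈ s, f i) by simpa using this Finset.univ
  intro s
  induction s using Finset.induction with
  | empty => simpa using finite ∅ Set.finite_empty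
  | insert i s _ ih =>
    rw [Finset.set_biUnion_insert]
    exact union _ _ (hf i) ih

end IsRationalSubset

section Paths

variable {G M : Type*} [Group G] [Monoid M] {A : Set (G × M)} {S T : Set G} {a b c : G}
  {m m' : M}

inductive IsPath (A : Set (G × M)) (S : Set G) : G → G → M → Prop
  | single {a b : G} {m : M} : (a⁻¹ * b, m) ∈ A → IsPath A S a b m
  | cons {a c b : G} {m m' : M} :
      (a⁻¹ * c, m) ∈ A → c ∈ S → IsPath A S c b m' → IsPath A S a b (m * m')

def pathLabels (A : Set (G × M)) (S : Set G) (a b : G) : Set M := {m | IsPath A S a b m}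

namespace IsPath

lemma mono (hST : S ⊆ T) (h : IsPath A S a b m) : IsPath A T a b m := by
  induction h with
  | single h => exact single h
  | cons h hc _ ih => exact cons h (hST hc) ih

lemma append (hc : c ∈ S) (h : IsPath A S a c m) (h' : IsPath A S c b m') :
    IsPath A S a b (m * m') := by
  induction h with
  | single h => exact cons h hc h'
  | cons h hc' _ ih => rw [mul_assoc]; exact cons h hc' (ih hc h')

lemma append_closure (hc : c ∈ S) (h : IsPath A S a c m)
    (hu : m' ∈ Submonoid.closure (pathLabels A S c c)) : IsPath A S a c (m * m') := by
  induction hu using Submonoid.closure_induction generalizing m with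
  | mem x hx => exact h.append hc hx
  | one => simpa using h
  | mul x y _ _ ihx ihy => rw [← mul_assoc]; exact ihy (ihx h)

lemma mul_left (x : G) (h : IsPath A Set.univ a b m) : IsPath A Set.univ (x * a) (x * b) m := by
  induction h with
  | single h => exact single (by simpa [mul_assoc] using h)
  | cons h _ _ ih => exact cons (by simpa [mul_assoc] using h) trivial ih

lemma mem_closure (h : IsPath A S a b m) : (a⁻¹ * b, m) ∈ Submonoid.closure A := by
  induction h with
  | single h => exact Submonoid.subset_closure h
  | @cons a c b m m' h _ _ ih =>
    have hsplit : (a⁻¹ * b, m * m') = (a⁻¹ * c, m) * (c⁻¹ * b, m') := by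
      simp [mul_assoc]
    rw [hsplit]
    exact Submonoid.mul_mem _ (Submonoid.subset_closure h) ih

end IsPath

lemma pathLabels_empty (A : Set (G × M)) (a b : G) :
    pathLabels A ∅ a b = {m | (a⁻¹ * b, m) ∈ A} := by
  ext m
  constructor
  · rintro (h | ⟨_, hc, _⟩)
    exacts [h, absurd hc (Set.notMem_empty _)]
  · exact IsPath.single

/-- Kleene's formula: a path through `insert c S` either avoids `c` or splits at its first and
last visits to `c`. -/
lemma pathLabels_insert (A : Set (G × M)) (S : Set G) (c a b : G) :
    pathLabels A (insert c S) a b = pathLabels A S a b ∪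
      pathLabels A S a c * Submonoid.closure (pathLabels A S c c) * pathLabels A S c b := by
  ext m
  constructor
  · intro h
    induction h with
    | single h => exact Or.inl (.single h)
    | @cons a c' b m m' h hc' _ ih =>
      rcases hc' with rfl | hc'
      · rcases ih with ih | ⟨_, ⟨x, hx, u, hu, rfl⟩, y, hy, rfl⟩
        · exact Or.inr ⟨m * 1, ⟨m, .single h, 1, one_mem _, rfl⟩, m', ih, by rw [mul_one]⟩
        · refine Or.inr ⟨m * (x * u), ⟨m, .single h, x * u,
            mul_mem (Submonoid.subset_closure hx) hu, rfl⟩, y, hy, ?_⟩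
          simp only [mul_assoc]
      · rcases ih with ih | ⟨_, ⟨x, hx, u, hu, rfl⟩, y, hy, rfl⟩
        · exact Or.inl (.cons h hc' ih)
        · refine Or.inr ⟨m * x * u, ⟨m * x, .cons h hc' hx, u, hu, rfl⟩, y, hy, ?_⟩
          simp only [mul_assoc]
  · have hS : S ⊆ insert c S := Set.subset_insert c S
    have hc : c ∈ insert c S := Set.mem_insert c S
    rintro (h | ⟨_, ⟨x, hx, u, hu, rfl⟩, y, hy, rfl⟩)
    · exact h.mono hS
    · have hu' : u ∈ Submonoid.closure (pathLabels A (insert c S) c c) :=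
        Submonoid.closure_mono (fun z hz => IsPath.mono hS hz) hu
      exact ((hx.mono hS).append_closure hc hu').append hc (hy.mono hS)

lemma isRationalSubset_pathLabels (hA : ∀ g : G, IsRationalSubset {m : M | (g, m) ∈ A})
    (hS : S.Finite) (a b : G) : IsRationalSubset (pathLabels A S a b) := by
  induction S, hS using Set.Finite.induction_on generalizing a b with
  | empty => rw [pathLabels_empty]; exact hA _
  | @insert c S _ _ ih =>
    rw [pathLabels_insert]
    exact .union _ _ (ih a b) (.mul _ _ (.mul _ _ (ih a c) (.star _ (ih c c))) (ih c b))

lemma eq_one_or_isPath_of_mem_closure {x : G × M} (hx : x ∈ Submonoid.closure A) :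
    x = 1 ∨ IsPath A Set.univ 1 x.1 x.2 := by
  induction hx using Submonoid.closure_induction with
  | mem y hy => exact Or.inr (.single (by simpa using hy))
  | one => exact Or.inl rfl
  | mul y z _ _ ihy ihz =>
    rcases ihy with rfl | hy
    · simpa using ihz
    rcases ihz with rfl | hz
    · simpa using Or.inr hy
    have hz' := hz.mul_left y.1
    rw [mul_one] at hz'
    exact Or.inr (hy.append trivial hz')

lemma setOf_mem_closure_eq (A : Set (G × M)) (g : G) :
    {m | (g, m) ∈ (Submonoid.closure A : Set (G × M))} =
      {m | g = 1 ∧ m = 1} ∪ pathLabels A Set.univ 1 g := by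
  ext m
  constructor
  · intro h
    simpa [Prod.ext_iff, pathLabels] using eq_one_or_isPath_of_mem_closure h
  · rintro (⟨rfl, rfl⟩ | h)
    · exact one_mem (Submonoid.closure A)
    · simpa using IsPath.mem_closure h

end Paths

lemma setOf_mem_mul_eq_iUnion {G M : Type*} [Group G] [Monoid M] (A B : Set (G × M)) (g : G) :
    {m | (g, m) ∈ A * B} = ⋃ h : G, {u | (h, u) ∈ A} * {v | (h⁻¹ * g, v) ∈ B} := by
  ext m
  simp only [Set.mem_iUnion, Set.mem_mul, Set.mem_ofPred_eq]
  constructor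
  · rintro ⟨⟨h, u⟩, hu, ⟨h', v⟩, hv, huv⟩
    obtain ⟨rfl, rfl⟩ := Prod.ext_iff.mp huv
    exact ⟨h, u, hu, v, by simpa using hv, rfl⟩
  · rintro ⟨h, u, hu, v, hv, rfl⟩
    exact ⟨(h, u), hu, (h⁻¹ * g, v), hv, by simp⟩

theorem IsRationalSubset.setOf_mem {G M : Type*} [Group G] [Finite G] [Monoid M]
    {A : Set (G × M)} (hA : IsRationalSubset A) (g : G) :
    IsRationalSubset {m | (g, m) ∈ A} := by
  induction hA generalizing g with
  | finite A hA =>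
    exact .finite _ ((hA.image Prod.snd).subset fun m hm => ⟨(g, m), hm, rfl⟩)
  | union A B _ _ ihA ihB => exact .union _ _ (ihA g) (ihB g)
  | mul A B _ _ ihA ihB =>
    rw [setOf_mem_mul_eq_iUnion]
    exact .iUnion fun h => .mul _ _ (ihA h) (ihB (h⁻¹ * g))
  | star A _ ihA =>
    rw [setOf_mem_closure_eq]
    exact .union _ _ (.finite _ ((Set.finite_singleton 1).subset fun m hm => hm.2))
      (isRationalSubset_pathLabels ihA Set.finite_univ 1 g)

theorem stmt11 (G : Type*) [Group G] [Finite G] (n : ℕ)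
    (ρ : Set (G × FreeGroup (Fin n))) (hρ : IsRationalSubset ρ) (g : G) :
    IsRationalSubset {w : FreeGroup (Fin n) | (g, w) ∈ ρ} :=
  hρ.setOf_mem g
end
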